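/- arXiv:2311.11996 — 6 statements merged into one kernel-verified Lean document; each statement's English description precedes it below -/
import Mathlib

section
/- Let P be a polymatroid of rank r on [m] with rk_P({m}) = r. Then the following identity holds in ℚ[t_1,…,t_m]: Σ_{k ∈ I(P)∩ℤ^m} Π_{i=1}^{m} t_i^{(k_i)} = Σ_{k ∈ B(P)∩ℤ^m} (Π_{i=1}^{m−1} t_i^{(k_i)}) · t_m^{[k_m]}. -/
open MvPolynomial Finset

/-- The rank-function axioms of a polymatroid on a finite ground set. -/
def IsPolymatroid {α : Type*} [Fintype α] [DecidableEq α] (rk : Finset α → ℕ) : Prop :=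
  rk ∅ = 0 ∧ (∀ I J : Finset α, I ⊆ J → rk I ≤ rk J) ∧
    ∀ I J : Finset α, rk (I ∩ J) + rk (I ∪ J) ≤ rk I + rk J

/-- The base polytope `B(P)` of a polymatroid. -/
def basePolytope {α : Type*} [Fintype α] (rk : Finset α → ℕ) : Set (α → ℝ) :=
  {x | (∀ i, 0 ≤ x i) ∧ (∑ i, x i) = (rk Finset.univ : ℝ) ∧
      ∀ I : Finset α, (∑ i ∈ I, x i) ≤ (rk I : ℝ)}

/-- The independence polytope `I(P)` of a polymatroid. -/
def indepPolytope {α : Type*} [Fintype α] (rk : Finset α → ℕ) : Set (α → ℝ) :=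
  {x | (∀ i, 0 ≤ x i) ∧ ∀ I : Finset α, (∑ i ∈ I, x i) ≤ (rk I : ℝ)}

/-- `binomLower p k` is `p^{(k)} = binom(p + k - 1, k) = p(p+1)⋯(p+k-1)/k!`. -/
noncomputable def binomLower {σ K : Type*} [Field K] (p : MvPolynomial σ K) (k : ℕ) :
    MvPolynomial σ K :=
  (k.factorial : K)⁻¹ • ∏ j ∈ Finset.range k, (p + MvPolynomial.C (j : K))

/-- `binomUpper p k` is `p^{[k]} = binom(p + k, k) = (p+1)(p+2)⋯(p+k)/k!`. -/
noncomputable def binomUpper {σ K : Type*} [Field K] (p : MvPolynomial σ K) (k : ℕ) :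
    MvPolynomial σ K :=
  (k.factorial : K)⁻¹ • ∏ j ∈ Finset.range k, (p + MvPolynomial.C ((j : K) + 1))

/-!
Because `rk {last} = rk univ`, monotonicity gives every set containing the last element full
rank, so the only constraints on an integer vector `κ = (μ, j)` that involve `j` are
`|μ| + j ≤ r` (for `I(P)`) and `|μ| + j = r` (for `B(P)`); the remaining ones constrain `μ`
alone. Grouping the left-hand side by `μ`, the last coordinate runs over `0, …, r - |μ|`, and
the hockey-stick identity `∑_{j ≤ n} t^{(j)} = t^{[n]}` turns this into the right-hand side.
-/

section Binomial

variable {σ K : Type*} [Field K] [CharZero K]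

theorem binomUpper_succ (p : MvPolynomial σ K) (k : ℕ) :
    binomUpper p (k + 1) = binomUpper p k + binomLower p (k + 1) := by
  have hfact : ((k + 1).factorial : K)⁻¹ * ((k : K) + 1) = (k.factorial : K)⁻¹ := by
    rw [Nat.factorial_succ]; push_cast; field_simp
  have hlower :
      ∏ j ∈ range (k + 1), (p + C (j : K)) = p * ∏ j ∈ range k, (p + C ((j : K) + 1)) := by
    rw [prod_range_succ']; push_cast; simp [mul_comm]
  rw [binomUpper, binomUpper, binomLower, prod_range_succ, hlower, smul_eq_C_mul, smul_eq_C_mul,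
    smul_eq_C_mul, ← hfact]
  simp only [map_mul, map_add, map_natCast, map_one]
  ring

theorem binomUpper_eq_sum_range_binomLower (p : MvPolynomial σ K) (k : ℕ) :
    binomUpper p k = ∑ j ∈ range (k + 1), binomLower p j := by
  induction k with
  | zero => simp [binomUpper, binomLower]
  | succ k ih => rw [sum_range_succ, ← ih, binomUpper_succ]

end Binomial

theorem Fin.forall_finset_last_notMem_iff {m : ℕ} {P : Finset (Fin (m + 1)) → Prop} :
    (∀ I, Fin.last m ∉ I → P I) ↔ ∀ J : Finset (Fin m), P (J.map Fin.castSuccEmb) := by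
  refine ⟨fun h J => h _ (by simp), fun h I hI => ?_⟩
  convert h (I.preimage Fin.castSucc (Fin.castSucc_injective m).injOn)
  ext i
  cases i using Fin.lastCases <;> simp [hI]

theorem finsum_mem_eq_finsum_finsum_snoc {M β : Type*} [AddCommMonoid M] {m : ℕ}
    {p : (Fin (m + 1) → β) → Prop} (hp : {κ | p κ}.Finite) (f : (Fin (m + 1) → β) → M) :
    ∑ᶠ (κ) (_ : p κ), f κ =
      ∑ᶠ (μ : Fin m → β) (j : β) (_ : p (Fin.snoc μ j)), f (Fin.snoc μ j) := by
  let e := (Equiv.prodComm (Fin m → β) β).trans (Fin.snocEquiv fun _ => β)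
  rw [← finsum_comp_equiv e, finsum_curry]
  · rfl
  · refine (hp.preimage e.injective.injOn).subset fun x hx => ?_
    by_contra h
    have : IsEmpty (p (e x)) := ⟨h⟩
    exact hx (finsum_of_isEmpty _)

theorem finsum_mem_add_le_eq_sum_range {M : Type*} [AddCommMonoid M] (g : ℕ → M) {s n : ℕ}
    (h : s ≤ n) : ∑ᶠ (j) (_ : s + j ≤ n), g j = ∑ j ∈ range (n - s + 1), g j := by
  rw [← finsum_mem_coe_finset]
  refine finsum_congr fun j => ?_
  rw [coe_range, Set.mem_Iio, show s + j ≤ n ↔ j < n - s + 1 by omega]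

theorem finsum_mem_add_eq {M : Type*} [AddCommMonoid M] (g : ℕ → M) {s n : ℕ}
    (h : s ≤ n) : ∑ᶠ (j) (_ : s + j = n), g j = g (n - s) := by
  rw [finsum_eq_single _ (n - s)]
  · rw [finsum_eq_if, if_pos (by omega)]
  · intro j hj
    rw [finsum_eq_if, if_neg (by omega)]

section Polytope

variable {α : Type*} [Fintype α] {rk : Finset α → ℕ}

theorem IsPolymatroid.monotone [DecidableEq α] (hP : IsPolymatroid rk) : Monotone rk :=
  fun I J hIJ => hP.2.1 I J hIJ

theorem mem_basePolytope_iff {x : α → ℝ} :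
    x ∈ basePolytope rk ↔ x ∈ indepPolytope rk ∧ ∑ i, x i = rk univ := by
  simp only [basePolytope, indepPolytope, Set.mem_ofPred_eq]
  tauto

theorem natCast_mem_indepPolytope_iff {κ : α → ℕ} :
    (fun i => (κ i : ℝ)) ∈ indepPolytope rk ↔ ∀ I, ∑ i ∈ I, κ i ≤ rk I := by
  simp [indepPolytope, ← Nat.cast_sum]

theorem natCast_mem_indepPolytope_iff_of_rk_singleton_eq (hrk : Monotone rk) {a : α}
    (ha : rk {a} = rk univ) {κ : α → ℕ} :
    (fun i => (κ i : ℝ)) ∈ indepPolytope rk ↔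
      (∀ I, a ∉ I → ∑ i ∈ I, κ i ≤ rk I) ∧ ∑ i, κ i ≤ rk univ := by
  rw [natCast_mem_indepPolytope_iff]
  refine ⟨fun h => ⟨fun I _ => h I, h univ⟩, fun ⟨hI, huniv⟩ I => ?_⟩
  by_cases haI : a ∈ I
  · calc ∑ i ∈ I, κ i ≤ ∑ i, κ i := sum_le_sum_of_subset (subset_univ I)
      _ ≤ rk {a} := ha ▸ huniv
      _ ≤ rk I := hrk (singleton_subset_iff.mpr haI)
  · exact hI I haI

theorem natCast_mem_basePolytope_iff_of_rk_singleton_eq (hrk : Monotone rk) {a : α}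
    (ha : rk {a} = rk univ) {κ : α → ℕ} :
    (fun i => (κ i : ℝ)) ∈ basePolytope rk ↔
      (∀ I, a ∉ I → ∑ i ∈ I, κ i ≤ rk I) ∧ ∑ i, κ i = rk univ := by
  rw [mem_basePolytope_iff, natCast_mem_indepPolytope_iff_of_rk_singleton_eq hrk ha,
    ← Nat.cast_sum, Nat.cast_inj]
  exact ⟨fun ⟨⟨hI, _⟩, hsum⟩ => ⟨hI, hsum⟩, fun ⟨hI, hsum⟩ => ⟨⟨hI, hsum.le⟩, hsum⟩⟩

end Polytope

theorem Set.finite_setOf_sum_le {α : Type*} [Fintype α] (n : ℕ) :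
    {κ : α → ℕ | ∑ i, κ i ≤ n}.Finite :=
  (Set.Finite.pi (t := fun _ => Set.Iic n) fun _ => Set.finite_Iic n).subset
    fun κ hκ i _ =>
      (single_le_sum (fun j _ => Nat.zero_le (κ j)) (Finset.mem_univ i)).trans hκ

theorem forall_last_notMem_sum_snoc_le_iff {m : ℕ} {rk : Finset (Fin (m + 1)) → ℕ}
    {μ : Fin m → ℕ} {j : ℕ} :
    (∀ I, Fin.last m ∉ I → ∑ i ∈ I, (Fin.snoc μ j : Fin (m + 1) → ℕ) i ≤ rk I) ↔
      ∀ J : Finset (Fin m), ∑ i ∈ J, μ i ≤ rk (J.map Fin.castSuccEmb) := by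
  rw [Fin.forall_finset_last_notMem_iff]
  simp

/-- For a polymatroid `P` of rank `r` on a ground set `{0, …, m}` (of size `m + 1`) whose last
element has full rank `r`, one has
`Σ_{κ ∈ I(P)∩ℤ^{m+1}} Π_i t_i^{(κ_i)} = Σ_{κ ∈ B(P)∩ℤ^{m+1}} (Π_{i ≠ last} t_i^{(κ_i)}) · t_last^{[κ_last]}`
in `ℚ[t_0, …, t_m]`. -/
theorem snapper_sum_indep_eq_sum_base
    {m r : ℕ} (rk : Finset (Fin (m + 1)) → ℕ) (hP : IsPolymatroid rk)
    (hrank : rk Finset.univ = r) (hlast : rk {Fin.last m} = r) :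
    (∑ᶠ (κ : Fin (m + 1) → ℕ) (_ : (fun i => (κ i : ℝ)) ∈ indepPolytope rk),
        ∏ i, binomLower (MvPolynomial.X i : MvPolynomial (Fin (m + 1)) ℚ) (κ i)) =
      ∑ᶠ (κ : Fin (m + 1) → ℕ) (_ : (fun i => (κ i : ℝ)) ∈ basePolytope rk),
        (∏ i : Fin m, binomLower (MvPolynomial.X i.castSucc) (κ i.castSucc)) *
          binomUpper (MvPolynomial.X (Fin.last m)) (κ (Fin.last m)) := by
  subst hrank
  have hrk := hP.monotone
  simp only [natCast_mem_indepPolytope_iff_of_rk_singleton_eq hrk hlast,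
    natCast_mem_basePolytope_iff_of_rk_singleton_eq hrk hlast]
  rw [finsum_mem_eq_finsum_finsum_snoc, finsum_mem_eq_finsum_finsum_snoc]
  rotate_left
  · exact (Set.finite_setOf_sum_le _).subset fun _ h => h.2.le
  · exact (Set.finite_setOf_sum_le _).subset fun _ => And.right
  refine finsum_congr fun μ => ?_
  simp only [forall_last_notMem_sum_snoc_le_iff, Fin.sum_univ_castSucc, Fin.prod_univ_castSucc,
    Fin.snoc_castSucc, Fin.snoc_last]
  by_cases hμ : ∀ J : Finset (Fin m), ∑ i ∈ J, μ i ≤ rk (J.map Fin.castSuccEmb)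
  · have hle : ∑ i, μ i ≤ rk univ := (hμ univ).trans (hrk (subset_univ _))
    simp only [hμ, implies_true, true_and]
    rw [finsum_mem_add_le_eq_sum_range _ hle, finsum_mem_add_eq _ hle, ← mul_sum,
      binomUpper_eq_sum_range_binomLower]
  · simp [hμ]
end

section
/- Let d ≥ 0 be an integer, let p ∈ ℚ[q] be a polynomial of degree at most d, and let h_0,…,h_d ∈ ℚ. Then the identity of formal power series Σ_{j≥0} p(j) q^j = (h_0 + h_1 q + ⋯ + h_d q^d)/(1−q)^{d+1} holds in ℚ[[q]] if and only if p(q) = Σ_{k=0}^{d} h_k · binom(q+d−k, d) as polynomials in q. -/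
/-!
The coefficient of `q^j` on the right-hand side is `Σ_k h_k binom(j - k + d, d)`, which is the
value at `j` of `Σ_k h_k binom(q + d - k, d)`, because `binom(q + d - k, d)` is `d!⁻¹` times a
falling factorial vanishing at `q = 0, …, k - 1`. Both sides are thus generating functions of
polynomial sequences, and a polynomial over `ℚ` is determined by its values at the naturals.
-/

open Polynomial PowerSeries

/-- `binomShift d k` is the polynomial `binom(q + d - k, d) = (q+d-k)(q+d-k-1)⋯(q-k+1)/d!`
in the variable `q`. -/
noncomputable def binomShift (d k : ℕ) : Polynomial ℚ :=
  (d.factorial : ℚ)⁻¹ • ∏ l ∈ Finset.range d, (Polynomial.X + Polynomial.C ((d : ℚ) - k - l))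

lemma binomShift_eval (d k : ℕ) (x : ℚ) :
    (binomShift d k).eval x = (d.factorial : ℚ)⁻¹ * (descPochhammer ℚ d).eval (x + d - k) := by
  simp only [binomShift, eval_smul, smul_eq_mul, eval_prod, eval_add, eval_X, eval_C,
    descPochhammer_eval_eq_prod_range, add_sub_assoc, sub_sub]

/-- The truncated difference `j + d - k` is harmless for `k ≤ d`: when `j < k` it is below `d`,
and both sides vanish. -/
lemma binomShift_eval_natCast {d k : ℕ} (hk : k ≤ d) (j : ℕ) :
    (binomShift d k).eval (j : ℚ) = ((j + d - k).choose d : ℚ) := by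
  have hcast : (j : ℚ) + d - k = ((j + d - k : ℕ) : ℚ) := by
    rw [Nat.cast_sub (by omega)]; push_cast; ring
  rw [binomShift_eval, hcast, descPochhammer_eval_eq_descFactorial,
    Nat.descFactorial_eq_factorial_mul_choose, Nat.cast_mul,
    inv_mul_cancel_left₀ (by exact_mod_cast d.factorial_ne_zero)]

lemma PowerSeries.coeff_X_pow_mul_mk_choose {R : Type*} [Semiring R] {d k : ℕ} (hk : k ≤ d)
    (j : ℕ) :
    coeff j (X ^ k * mk fun i => ((i + d).choose d : R)) = ((j + d - k).choose d : R) := by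
  rw [coeff_X_pow_mul', coeff_mk]
  split_ifs with hkj
  · rw [Nat.sub_add_comm hkj]
  · rw [Nat.choose_eq_zero_of_lt (by omega), Nat.cast_zero]

lemma PowerSeries.mk_eval_natCast_inj {R : Type*} [CommRing R] [IsDomain R] [CharZero R]
    {p q : R[X]} : (mk fun j : ℕ => p.eval (j : R)) = (mk fun j => q.eval (j : R)) ↔ p = q := by
  refine ⟨fun h => eq_of_infinite_eval_eq p q ?_, fun h => h ▸ rfl⟩
  refine (Set.infinite_range_of_injective Nat.cast_injective).mono ?_
  rintro _ ⟨j, rfl⟩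
  simpa using congrArg (coeff j) h

theorem hilbert_series_expansion_iff_binomial_expansion_general
    (d : ℕ) (p : Polynomial ℚ) (h : ℕ → ℚ) :
    (PowerSeries.mk (fun j => p.eval (j : ℚ)) =
        (∑ k ∈ Finset.range (d + 1), PowerSeries.C (h k) * PowerSeries.X ^ k) *
          PowerSeries.mk (fun j => ((j + d).choose d : ℚ))) ↔
      p = ∑ k ∈ Finset.range (d + 1), Polynomial.C (h k) * binomShift d k := by
  suffices hseries :
      (∑ k ∈ Finset.range (d + 1), PowerSeries.C (h k) * PowerSeries.X ^ k) *
          PowerSeries.mk (fun j => ((j + d).choose d : ℚ)) =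
        mk fun j => (∑ k ∈ Finset.range (d + 1), Polynomial.C (h k) * binomShift d k).eval (j : ℚ)
    by rw [hseries, mk_eval_natCast_inj]
  ext j
  simp only [Finset.sum_mul, map_sum, coeff_mk, eval_finsetSum, eval_mul, eval_C, mul_assoc,
    PowerSeries.coeff_C_mul]
  refine Finset.sum_congr rfl fun k hk => ?_
  have hkd : k ≤ d := Nat.lt_succ_iff.mp (Finset.mem_range.mp hk)
  rw [coeff_X_pow_mul_mk_choose hkd, binomShift_eval_natCast hkd]

/-- For a polynomial `p` of degree at most `d` and rationals `h_0, …, h_d`, the identity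
`Σ_{j≥0} p(j) q^j = (h_0 + h_1 q + ⋯ + h_d q^d) · (1-q)^{-(d+1)}` of formal power series
(where `(1-q)^{-(d+1)} = Σ_{j≥0} binom(j+d, d) q^j`) holds if and only if
`p(q) = Σ_{k=0}^d h_k · binom(q+d-k, d)` as polynomials. -/
theorem hilbert_series_expansion_iff_binomial_expansion
    (d : ℕ) (p : Polynomial ℚ) (hp : p.natDegree ≤ d) (h : ℕ → ℚ) :
    (PowerSeries.mk (fun j => p.eval (j : ℚ)) =
        (∑ k ∈ Finset.range (d + 1), PowerSeries.C (h k) * PowerSeries.X ^ k) *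
          PowerSeries.mk (fun j => ((j + d).choose d : ℚ))) ↔
      p = ∑ k ∈ Finset.range (d + 1), Polynomial.C (h k) * binomShift d k :=
  hilbert_series_expansion_iff_binomial_expansion_general d p h
end

section
/- Fix m ≥ 1. The function assigning to each polymatroid P on [m] the polynomial Σ_{k ∈ I(P)∩ℤ^m} Π_{i=1}^m binom(t_i+k_i−1, k_i) ∈ ℚ[t_1,…,t_m] is valuative: whenever P_1,…,P_s are polymatroids on [m] and c_1,…,c_s are integers such that Σ_{i=1}^s c_i · 1_{B(P_i)} = 0 as a function ℝ^m → ℤ, one has Σ_{i=1}^s c_i · Σ_{k ∈ I(P_i)∩ℤ^m} Π_{j=1}^m binom(t_j+k_j−1, k_j) = 0 in ℚ[t_1,…,t_m]. -/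
/-!
The Euler characteristic of compact convex sets (one if nonempty, zero if empty) is a valuation:
a linear relation among indicator functions of compact convex sets in `ℝⁿ` persists after each
indicator is replaced by the set's Euler characteristic. In dimension one, a relation among
indicators of intervals `[αᵢ, βᵢ]`, compared just left of a point `a`, says that the coefficients
of the intervals with `αᵢ = a` cancel; in general one projects away a coordinate, the slices
over a point satisfying the one-dimensional relation.

For a lattice point `κ`, the slab `B(P) ∩ {y ≥ κ}` is nonempty exactly when `κ ∈ I(P)`: a point
of `I(P)` can be raised until every element lies in a tight set, and by submodularity the union
of tight sets is tight. Intersecting with `{y ≥ κ}` preserves `∑ cᵢ 1_{B(Pᵢ)} = 0`, so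
`∑ cᵢ [κ ∈ I(Pᵢ)] = 0` for every `κ`, and the polynomial identity holds term by term.
-/

open MvPolynomial Finset

open Filter Topology

section EulerCharacteristic

variable {ι M : Type*} [Fintype ι] [AddCommGroup M]

theorem Convex.eventually_nhdsLT_mem_iff {S : Set ℝ} (hc : Convex ℝ S) (hk : IsCompact S)
    (a : ℝ) : ∀ᶠ t in 𝓝[<] a, t ∈ S ↔ a ∈ S ∧ a ≠ sInf S := by
  obtain rfl | hne := S.eq_empty_or_nonempty
  · simp
  have hS := eq_Icc_of_connected_compact ⟨hne, hc.isPreconnected⟩ hk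
  set α := sInf S
  set β := sSup S
  rw [hS]
  rcases le_or_gt a α with haα | hαa
  · filter_upwards [self_mem_nhdsWithin] with t (hta : t < a)
    simp only [Set.mem_Icc]
    constructor
    · rintro ⟨hαt, -⟩
      linarith
    · rintro ⟨⟨hαa, -⟩, hne⟩
      exact absurd (le_antisymm haα hαa) hne
  rcases le_or_gt a β with haβ | hβa
  · filter_upwards [Ioo_mem_nhdsLT hαa] with t ht
    simp only [Set.mem_Icc, hαa.le, haβ, hαa.ne', ne_eq, not_false_eq_true, and_self, iff_true]
    exact ⟨ht.1.le, ht.2.le.trans haβ⟩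
  · filter_upwards [Ioo_mem_nhdsLT hβa] with t ht
    simp only [Set.mem_Icc]
    constructor
    · rintro ⟨-, htβ⟩
      linarith [ht.1]
    · rintro ⟨⟨-, haβ⟩, -⟩
      linarith

open scoped Classical in
theorem sum_nonempty_eq_zero_real {K : ι → Set ℝ} (c : ι → M)
    (hconv : ∀ i, Convex ℝ (K i)) (hcomp : ∀ i, IsCompact (K i))
    (hrel : ∀ t, ∑ i, (K i).indicator (fun _ => c i) t = 0) :
    ∑ i with (K i).Nonempty, c i = 0 := by
  have hleft : ∀ a, ∑ i with a ∈ K i ∧ a = sInf (K i), c i = 0 := by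
    intro a
    obtain ⟨t, ht⟩ := (eventually_all.2 fun i =>
      (hconv i).eventually_nhdsLT_mem_iff (hcomp i) a).exists
    have hK : ∑ i with a ∈ K i, c i = 0 := by
      simpa only [Set.indicator_apply, sum_filter] using hrel a
    have hKerase : ∑ i with a ∈ K i ∧ ¬a = sInf (K i), c i = 0 := by
      simpa only [Set.indicator_apply, sum_filter, ht, ne_eq] using hrel t
    rw [← sum_filter_add_sum_filter_not _ (fun i => a = sInf (K i)), filter_filter,
      filter_filter, hKerase, add_zero] at hK
    exact hK
  calc ∑ i with (K i).Nonempty, c i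
      = ∑ a ∈ univ.image (fun i => sInf (K i)), ∑ i with (K i).Nonempty ∧ sInf (K i) = a, c i := by
        rw [← sum_fiberwise_of_maps_to (g := fun i => sInf (K i))
          fun i _ => mem_image_of_mem (fun i => sInf (K i)) (mem_univ i)]
        simp only [filter_filter]
    _ = 0 := sum_eq_zero fun a _ => by
        rw [← hleft a]
        refine sum_congr (filter_congr fun i _ => ?_) fun _ _ => rfl
        constructor
        · rintro ⟨hne, rfl⟩
          exact ⟨(hcomp i).sInf_mem hne, rfl⟩
        · rintro ⟨ha, rfl⟩
          exact ⟨⟨_, ha⟩, rfl⟩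

theorem Convex.cons_preimage {n : ℕ} {K : Set (Fin (n + 1) → ℝ)} (hK : Convex ℝ K)
    (x : Fin n → ℝ) : Convex ℝ ((Fin.cons · x) ⁻¹' K) := by
  intro t₁ h₁ t₂ h₂ a b ha hb hab
  rw [Set.mem_preimage]
  convert hK h₁ h₂ ha hb hab using 1
  ext j
  cases j using Fin.cases <;> simp [← add_mul, hab]

theorem IsCompact.cons_preimage {n : ℕ} {K : Set (Fin (n + 1) → ℝ)} (hK : IsCompact K)
    (x : Fin n → ℝ) : IsCompact ((Fin.cons · x) ⁻¹' K : Set ℝ) :=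
  (hK.image (continuous_apply 0)).of_isClosed_subset
    (hK.isClosed.preimage (continuous_id.finCons continuous_const)) fun _ ht => ⟨_, ht, rfl⟩

open scoped Classical in
theorem sum_nonempty_eq_zero_pi {n : ℕ} {K : ι → Set (Fin n → ℝ)} (c : ι → M)
    (hconv : ∀ i, Convex ℝ (K i)) (hcomp : ∀ i, IsCompact (K i))
    (hrel : ∀ x, ∑ i, (K i).indicator (fun _ => c i) x = 0) :
    ∑ i with (K i).Nonempty, c i = 0 := by
  induction n with
  | zero =>
    have hK : ∀ i, (K i).Nonempty ↔ 0 ∈ K i := fun i =>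
      ⟨fun ⟨x, hx⟩ => Subsingleton.elim x 0 ▸ hx, fun h => ⟨0, h⟩⟩
    simpa only [hK, Set.indicator_apply, sum_filter] using hrel 0
  | succ n ih =>
    have hproj : ∀ x, ∑ i, (Fin.tail '' K i).indicator (fun _ => c i) x = 0 := by
      intro x
      have hslice := sum_nonempty_eq_zero_real c (fun i => (hconv i).cons_preimage x)
        (fun i => (hcomp i).cons_preimage x) fun t => hrel _
      have hmem : ∀ i, ((Fin.cons · x) ⁻¹' K i : Set ℝ).Nonempty ↔ x ∈ Fin.tail '' K i :=
        fun i => ⟨fun ⟨t, ht⟩ => ⟨_, ht, Fin.tail_cons _ _⟩,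
          fun ⟨y, hy, hyx⟩ => ⟨y 0, by simpa [← hyx, Fin.cons_self_tail] using hy⟩⟩
      simpa only [hmem, Set.indicator_apply, sum_filter] using hslice
    have himage : IsLinearMap ℝ (Fin.tail : (Fin (n + 1) → ℝ) → Fin n → ℝ) :=
      ⟨fun _ _ => rfl, fun _ _ => rfl⟩
    simpa only [Set.image_nonempty] using ih (fun i => (hconv i).is_linear_image himage)
      (fun i => (hcomp i).image (continuous_pi fun _ => continuous_apply _)) hproj

theorem sum_indicator_inter_eq_zero {E : Type*} {K : ι → Set E} {c : ι → M}
    (hrel : ∀ x, ∑ i, (K i).indicator (fun _ => c i) x = 0) (S : Set E) (x : E) :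
    ∑ i, (K i ∩ S).indicator (fun _ => c i) x = 0 := by
  classical
  by_cases hx : x ∈ S
  · simpa only [Set.indicator_apply, Set.mem_inter_iff, hx, and_true] using hrel x
  · simp only [Set.indicator_apply, Set.mem_inter_iff, hx, and_false, if_false, sum_const_zero]

end EulerCharacteristic

theorem isLinearMap_sum_apply {α : Type*} (I : Finset α) :
    IsLinearMap ℝ fun x : α → ℝ => ∑ i ∈ I, x i :=
  ⟨fun _ _ => sum_add_distrib, fun _ _ => (mul_sum _ _ _).symm⟩

theorem continuous_sum_apply {α : Type*} (I : Finset α) :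
    Continuous fun x : α → ℝ => ∑ i ∈ I, x i :=
  continuous_finsetSum _ fun i _ => continuous_apply i

section Polytope

variable {α : Type*} [Fintype α] (rk : Finset α → ℕ)

theorem basePolytope_eq_inter :
    basePolytope rk = Set.Ici 0 ∩ {x | ∑ i, x i = (rk univ : ℝ)} ∩
      ⋂ I, {x | ∑ i ∈ I, x i ≤ (rk I : ℝ)} := by
  ext x
  simp [basePolytope, Pi.le_def, and_assoc]

theorem convex_basePolytope : Convex ℝ (basePolytope rk) := by
  rw [basePolytope_eq_inter]
  exact ((convex_Ici 0).inter (convex_hyperplane (isLinearMap_sum_apply univ) _)).inter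
    (convex_iInter fun I => convex_halfSpace_le (isLinearMap_sum_apply I) _)

theorem isCompact_basePolytope : IsCompact (basePolytope rk) := by
  have hclosed : IsClosed (basePolytope rk) := by
    rw [basePolytope_eq_inter]
    exact (isClosed_Ici.inter (isClosed_eq (continuous_sum_apply univ) continuous_const)).inter
      (isClosed_iInter fun I => isClosed_le (continuous_sum_apply I) continuous_const)
  refine (isCompact_Icc (a := 0) (b := fun _ => (rk univ : ℝ))).of_isClosed_subset hclosed
    fun x hx => ⟨hx.1, fun j => ?_⟩
  exact (single_le_sum (fun i _ => hx.1 i) (mem_univ j)).trans hx.2.1.le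

theorem finite_natCast_mem_indepPolytope :
    {κ : α → ℕ | (fun j => (κ j : ℝ)) ∈ indepPolytope rk}.Finite := by
  classical
  refine (Set.finite_Iic fun j => rk {j}).subset fun κ hκ j => ?_
  exact_mod_cast (sum_singleton (fun j => (κ j : ℝ)) j).symm.trans_le (hκ.2 {j})

end Polytope

section Polymatroid

variable {α : Type*} [Fintype α]

def IsTight (rk : Finset α → ℕ) (y : α → ℝ) (T : Finset α) : Prop :=
  ∑ j ∈ T, y j = rk T

variable {rk : Finset α → ℕ}

/-- Raise `x a` by the least slack `rk T - ∑ j ∈ T, x j` over the sets `T ∋ a`. -/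
theorem exists_indepPolytope_ge_isTight [DecidableEq α] {x : α → ℝ}
    (hx : x ∈ indepPolytope rk) (a : α) :
    ∃ y ∈ indepPolytope rk, x ≤ y ∧ (∃ T, a ∈ T ∧ IsTight rk y T) ∧
      ∀ T, IsTight rk x T → IsTight rk y T := by
  let slack : Finset α → ℝ := fun T => rk T - ∑ j ∈ T, x j
  have hslack : ∀ T, 0 ≤ slack T := fun T => sub_nonneg.2 (hx.2 T)
  obtain ⟨T₀, hT₀, hmin⟩ := exists_min_image {T | a ∈ T} slack ⟨{a}, by simp⟩
  rw [mem_filter_univ] at hT₀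
  have hsingle : (0 : α → ℝ) ≤ Pi.single a (slack T₀) := Pi.single_nonneg.2 (hslack T₀)
  set y : α → ℝ := x + Pi.single a (slack T₀)
  have hsum : ∀ T, ∑ j ∈ T, y j =
      ∑ j ∈ T, x j + if a ∈ T then slack T₀ else 0 := fun T => by
    rw [← sum_pi_single' a (slack T₀) T, ← sum_add_distrib]
    rfl
  refine ⟨y, ⟨fun j => ?_, fun I => ?_⟩,
    le_add_of_nonneg_right hsingle, ⟨T₀, hT₀, ?_⟩, fun T hT => ?_⟩
  · exact add_nonneg (hx.1 j) (hsingle j)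
  · rw [hsum]
    split_ifs with haI
    · linarith [hmin I ((mem_filter_univ I).2 haI)]
    · simpa using hx.2 I
  · rw [IsTight, hsum, if_pos hT₀]
    ring
  · have hslackT : slack T = 0 := sub_eq_zero.2 hT.symm
    rw [IsTight, hsum, hT]
    split_ifs with haT
    · linarith [hmin T ((mem_filter_univ T).2 haT), hslack T₀]
    · simp

theorem exists_indepPolytope_ge_forall_isTight [DecidableEq α] {x : α → ℝ}
    (hx : x ∈ indepPolytope rk) :
    ∃ y ∈ indepPolytope rk, x ≤ y ∧ ∀ a, ∃ T, a ∈ T ∧ IsTight rk y T := by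
  suffices ∀ S : Finset α, ∃ y ∈ indepPolytope rk, x ≤ y ∧ ∀ a ∈ S, ∃ T, a ∈ T ∧ IsTight rk y T by
    obtain ⟨y, hy, hxy, htight⟩ := this univ
    exact ⟨y, hy, hxy, fun a => htight a (mem_univ a)⟩
  intro S
  induction S using Finset.induction with
  | empty => exact ⟨x, hx, le_rfl, by simp⟩
  | insert a S _ ih =>
    obtain ⟨y, hy, hxy, htight⟩ := ih
    obtain ⟨z, hz, hyz, haz, hpres⟩ := exists_indepPolytope_ge_isTight hy a
    refine ⟨z, hz, hxy.trans hyz, fun b hb => ?_⟩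
    rcases mem_insert.1 hb with rfl | hbS
    · exact haz
    · obtain ⟨T, hbT, hT⟩ := htight b hbS
      exact ⟨T, hbT, hpres T hT⟩

theorem IsTight.union [DecidableEq α] (hP : IsPolymatroid rk) {y : α → ℝ}
    (hy : y ∈ indepPolytope rk) {A B : Finset α} (hA : IsTight rk y A) (hB : IsTight rk y B) :
    IsTight rk y (A ∪ B) := by
  have hsubmod : (rk (A ∩ B) : ℝ) + rk (A ∪ B) ≤ rk A + rk B := by exact_mod_cast hP.2.2 A B
  have hsum := sum_union_inter (s₁ := A) (s₂ := B) (f := y)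
  have hinter := hy.2 (A ∩ B)
  have hunion := hy.2 (A ∪ B)
  unfold IsTight at *
  linarith

theorem exists_basePolytope_ge [DecidableEq α] (hP : IsPolymatroid rk) {x : α → ℝ}
    (hx : x ∈ indepPolytope rk) : ∃ y ∈ basePolytope rk, x ≤ y := by
  obtain ⟨y, hy, hxy, htight⟩ := exists_indepPolytope_ge_forall_isTight hx
  choose T hT hTtight using htight
  have hU : IsTight rk y (univ.sup T) :=
    sup_induction (by simp [IsTight, hP.1]) (fun _ hA _ hB => hA.union hP hy hB)
      fun a _ => hTtight a
  have hUuniv : univ.sup T = univ := eq_univ_of_forall fun a => mem_sup.2 ⟨a, mem_univ a, hT a⟩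
  exact ⟨y, ⟨hy.1, hUuniv ▸ hU, hy.2⟩, hxy⟩

theorem nonempty_basePolytope_inter_Ici_iff [DecidableEq α] (hP : IsPolymatroid rk)
    {x : α → ℝ} (hx : 0 ≤ x) :
    (basePolytope rk ∩ Set.Ici x).Nonempty ↔ x ∈ indepPolytope rk := by
  refine ⟨fun ⟨y, hy, hxy⟩ => ⟨hx, fun I => ?_⟩, fun h => exists_basePolytope_ge hP h⟩
  exact (sum_le_sum fun j _ => hxy j).trans (hy.2.2 I)

end Polymatroid

open scoped Classical in
theorem sum_smul_finsum_mem_eq_zero {ι α R M : Type*} [Fintype ι] [Ring R] [AddCommGroup M]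
    [Module R M] {A : ι → Set α} (hA : ∀ i, (A i).Finite) (c : ι → R) (f : α → M)
    (h : ∀ a, ∑ i with a ∈ A i, c i = 0) : ∑ i, c i • ∑ᶠ a ∈ A i, f a = 0 := by
  set T := (Set.finite_iUnion hA).toFinset
  have hT : ∀ i, ∑ᶠ a ∈ A i, f a = ∑ a ∈ T, (A i).indicator f a := fun i => by
    rw [finsum_mem_def]
    refine finsum_eq_sum_of_support_subset _ fun a ha => ?_
    rw [Set.Finite.coe_toFinset]
    exact Set.mem_iUnion_of_mem i (Set.mem_of_indicator_ne_zero ha)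
  simp only [hT, smul_sum]
  rw [sum_comm]
  refine sum_eq_zero fun a _ => ?_
  simp only [Set.indicator_apply, smul_ite, smul_zero, ← sum_filter, ← sum_smul, h, zero_smul]

theorem snapper_polynomial_is_valuative_general
    {m : ℕ} (s : ℕ) (rk : Fin s → Finset (Fin m) → ℕ)
    (hP : ∀ i, IsPolymatroid (rk i)) (c : Fin s → ℤ)
    (hval : ∀ x : Fin m → ℝ,
      ∑ i, c i * Set.indicator (basePolytope (rk i)) (fun _ => (1 : ℤ)) x = 0) :
    ∑ i, (c i : ℚ) •
        (∑ᶠ (κ : Fin m → ℕ) (_ : (fun j => (κ j : ℝ)) ∈ indepPolytope (rk i)),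
          ∏ j, binomLower (MvPolynomial.X j : MvPolynomial (Fin m) ℚ) (κ j)) = 0 := by
  classical
  refine sum_smul_finsum_mem_eq_zero
    (A := fun i => {κ : Fin m → ℕ | (fun j => (κ j : ℝ)) ∈ indepPolytope (rk i)})
    (fun i => finite_natCast_mem_indepPolytope (rk i)) _ _ fun κ => ?_
  have hbase : ∀ x, ∑ i, (basePolytope (rk i)).indicator (fun _ => c i) x = 0 := by
    simpa only [← Set.indicator_const_mul, mul_one] using hval
  have hκ : (0 : Fin m → ℝ) ≤ fun j => (κ j : ℝ) := fun j => Nat.cast_nonneg _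
  have h := sum_nonempty_eq_zero_pi c
    (K := fun i => basePolytope (rk i) ∩ Set.Ici fun j => (κ j : ℝ))
    (fun i => (convex_basePolytope _).inter (convex_Ici _))
    (fun i => (isCompact_basePolytope _).inter_right isClosed_Ici)
    (sum_indicator_inter_eq_zero hbase _)
  rw [filter_congr fun i _ => nonempty_basePolytope_inter_Ici_iff (hP i) hκ] at h
  exact_mod_cast h

/-- The assignment `P ↦ Σ_{κ ∈ I(P)∩ℤ^m} Π_i binom(t_i + κ_i - 1, κ_i)` on polymatroids on
`[m]` is valuative: it kills every linear relation among indicator functions of base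
polytopes. -/
theorem snapper_polynomial_is_valuative
    {m : ℕ} (hm : 1 ≤ m) (s : ℕ) (rk : Fin s → Finset (Fin m) → ℕ)
    (hP : ∀ i, IsPolymatroid (rk i)) (c : Fin s → ℤ)
    (hval : ∀ x : Fin m → ℝ,
      ∑ i, c i * Set.indicator (basePolytope (rk i)) (fun _ => (1 : ℤ)) x = 0) :
    ∑ i, (c i : ℚ) •
        (∑ᶠ (κ : Fin m → ℕ) (_ : (fun j => (κ j : ℝ)) ∈ indepPolytope (rk i)),
          ∏ j, binomLower (MvPolynomial.X j : MvPolynomial (Fin m) ℚ) (κ j)) = 0 :=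
  snapper_polynomial_is_valuative_general s rk hP c hval
end

section
/- Fix m ≥ 1 and a ∈ ℤ_{≥0}^m. For a polymatroid P on [m] with cage a, define integers c_b(P) for each b ∈ ℤ^m with 0 ≤ b_i ≤ a_i (for all i) by downward induction on |b| = Σ_i b_i: c_b(P) = 0 if |b| > rk_P([m]); c_b(P) = 1 if |b| = rk_P([m]) and b ∈ B(P), and c_b(P) = 0 if |b| = rk_P([m]) and b ∉ B(P); and c_b(P) = 1 − Σ_{b'} c_{b'}(P) if |b| < rk_P([m]), where the sum is over b' with b ≤ b' ≤ a coordinatewise and b' ≠ b. Then for each such b, the function P ↦ c_b(P) on polymatroids on [m] with cage a is valuative: whenever P_1,…,P_s have cage a and integers c_1,…,c_s satisfy Σ_i c_i · 1_{B(P_i)} = 0 as a function ℝ^m → ℤ, one has Σ_i c_i · c_b(P_i) = 0. -/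
open Finset

attribute [local instance] Classical.propDecidable

/-- `c` satisfies Knutson's downward recursion for the polymatroid `rk` with cage `a`:
`c b = 0` if `|b| > rk([m])`; `c b` is the indicator of `b ∈ B(P)` if `|b| = rk([m])`; and
`c b = 1 - Σ_{b < b' ≤ a} c b'` if `|b| < rk([m])`. -/
def KnutsonCoeffs {m : ℕ} (a : Fin m → ℕ) (rk : Finset (Fin m) → ℕ)
    (c : (Fin m → ℕ) → ℤ) : Prop :=
  ∀ b : Fin m → ℕ, (∀ i, b i ≤ a i) →
    ((rk Finset.univ < ∑ i, b i → c b = 0) ∧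
      (∑ i, b i = rk Finset.univ →
        c b = if (fun i => (b i : ℝ)) ∈ basePolytope rk then 1 else 0) ∧
      (∑ i, b i < rk Finset.univ →
        c b = 1 - ∑ᶠ (b' : Fin m → ℕ)
          (_ : (∀ i, b i ≤ b' i ∧ b' i ≤ a i) ∧ b' ≠ b), c b'))

/-!
Knutson's recursion can be rewritten, in all three cases at once, as
`c_b(P) = [b ∈ B(P)] + [|b| < rk_P([m])] - ∑_{b < b' ≤ a} c_{b'}(P)`,
so by downward induction on `b` it suffices that the first two terms are valuative. The first is
the evaluation of `1_{B(P)}` at `b`. For the second, `B(P)` lies in the hyperplane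
`∑ x = rk_P([m])`, so restricting a relation `∑ c_i 1_{B(P_i)} = 0` to the half-space `∑ x > |b|`
keeps exactly the polytopes with `rk_{P_i}([m]) > |b|`; the Euler characteristic, a valuation on
compact convex sets that equals `1` on nonempty ones, then shows that their coefficients sum to
zero. The Euler characteristic relation is proved by slicing along the first coordinate; on the
line, comparing `∑ c_i 1_{K_i}` at `t` and just to the right of `t` isolates the segments whose
right endpoint is `t`.
-/

open Filter Topology

theorem IsCompact.eventually_nhdsGT_mem_iff {K : Set ℝ} (hpc : IsPreconnected K)
    (hcpt : IsCompact K) (t : ℝ) : ∀ᶠ u in 𝓝[>] t, u ∈ K ↔ t ∈ K ∧ t ≠ sSup K := by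
  rcases K.eq_empty_or_nonempty with rfl | hne
  · simp
  have hK := eq_Icc_of_connected_compact ⟨hne, hpc⟩ hcpt
  set l := sInf K
  set r := sSup K
  have hmem : ∀ x, x ∈ K ↔ l ≤ x ∧ x ≤ r := fun x => by rw [hK]; rfl
  simp only [hmem]
  by_cases htl : t < l
  · filter_upwards [Ioo_mem_nhdsGT htl] with u hu
    constructor <;> intro h <;> linarith [h.1, hu.2]
  by_cases htr : t < r
  · filter_upwards [Ioo_mem_nhdsGT htr] with u hu
    exact iff_of_true ⟨by linarith [hu.1], hu.2.le⟩ ⟨⟨not_lt.1 htl, htr.le⟩, htr.ne⟩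
  · filter_upwards [self_mem_nhdsWithin] with u (hu : t < u)
    refine iff_of_false (fun h => ?_) fun h => h.2 (le_antisymm h.1.2 (not_lt.1 htr))
    linarith [h.2]

theorem Finset.sum_filter_nonempty_eq_zero_of_isPreconnected {ι M : Type*} [AddCommMonoid M]
    (s : Finset ι) (K : ι → Set ℝ) (c : ι → M) (hpc : ∀ i ∈ s, IsPreconnected (K i))
    (hcpt : ∀ i ∈ s, IsCompact (K i)) (h : ∀ t, ∑ i ∈ s with t ∈ K i, c i = 0) :
    ∑ i ∈ s with (K i).Nonempty, c i = 0 := by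
  have hfiber : ∀ t, ∑ i ∈ s with (K i).Nonempty ∧ sSup (K i) = t, c i = 0 := by
    intro t
    obtain ⟨u, hu⟩ := ((eventually_all_finset s).2 fun i hi =>
      (hcpt i hi).eventually_nhdsGT_mem_iff (hpc i hi) t).exists
    have hsplit := sum_filter_add_sum_filter_not (s.filter (t ∈ K ·)) (fun i => t ≠ sSup (K i)) c
    rw [filter_filter, filter_filter, filter_congr fun i hi => (hu i hi).symm, h u, h t,
      zero_add] at hsplit
    rw [← hsplit]
    refine sum_congr (filter_congr fun i hi => ?_) fun _ _ => rfl
    constructor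
    · rintro ⟨hne, rfl⟩
      exact ⟨(hcpt i hi).sSup_mem hne, not_not.2 rfl⟩
    · rintro ⟨hmem, heq⟩
      exact ⟨⟨t, hmem⟩, (not_not.1 heq).symm⟩
  rw [← sum_fiberwise_of_maps_to fun i hi => mem_image_of_mem (fun i => sSup (K i)) hi]
  refine sum_eq_zero fun t _ => ?_
  rw [filter_filter]
  exact hfiber t

theorem Convex.preimage_finCons {n : ℕ} {K : Set (Fin (n + 1) → ℝ)} (hK : Convex ℝ K) (t : ℝ) :
    Convex ℝ (Fin.cons (α := fun _ => ℝ) t ⁻¹' K) := by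
  intro y hy z hz a b ha hb hab
  have hcons : Fin.cons (α := fun _ => ℝ) t (a • y + b • z) =
      a • Fin.cons (α := fun _ => ℝ) t y + b • Fin.cons (α := fun _ => ℝ) t z := by
    ext i
    cases i using Fin.cases with
    | zero => simp [← add_mul, hab]
    | succ i => simp
  simpa only [Set.mem_preimage, hcons] using hK hy hz ha hb hab

theorem IsCompact.preimage_finCons {n : ℕ} {K : Set (Fin (n + 1) → ℝ)} (hK : IsCompact K)
    (t : ℝ) : IsCompact (Fin.cons (α := fun _ => ℝ) t ⁻¹' K) :=
  (hK.image (continuous_pi fun i => continuous_apply i.succ)).of_isClosed_subset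
    (hK.isClosed.preimage (continuous_const.finCons continuous_id))
    fun _ hy => ⟨_, hy, Fin.tail_cons _ _⟩

theorem finCons_preimage_nonempty_iff {n : ℕ} (K : Set (Fin (n + 1) → ℝ)) (t : ℝ) :
    (Fin.cons (α := fun _ => ℝ) t ⁻¹' K).Nonempty ↔ t ∈ (fun x => x 0) '' K := by
  constructor
  · rintro ⟨y, hy⟩
    exact ⟨_, hy, Fin.cons_zero _ _⟩
  · rintro ⟨x, hx, rfl⟩
    exact ⟨Fin.tail x, by rwa [Set.mem_preimage, Fin.cons_self_tail]⟩

theorem Finset.sum_filter_nonempty_eq_zero_of_convex {ι M : Type*} [AddCommMonoid M] {n : ℕ}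
    (s : Finset ι) (K : ι → Set (Fin n → ℝ)) (c : ι → M) (hconv : ∀ i ∈ s, Convex ℝ (K i))
    (hcpt : ∀ i ∈ s, IsCompact (K i)) (h : ∀ x, ∑ i ∈ s with x ∈ K i, c i = 0) :
    ∑ i ∈ s with (K i).Nonempty, c i = 0 := by
  induction n with
  | zero =>
    rw [← h 0]
    exact sum_congr (filter_congr fun i _ =>
      ⟨fun ⟨x, hx⟩ => Subsingleton.elim x 0 ▸ hx, fun hx => ⟨0, hx⟩⟩) fun _ _ => rfl
  | succ n ih =>
    have hslice : ∀ t, ∑ i ∈ s with t ∈ (fun x => x 0) '' K i, c i = 0 := fun t => by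
      simp only [← finCons_preimage_nonempty_iff]
      exact ih _ (fun i hi => (hconv i hi).preimage_finCons t)
        (fun i hi => (hcpt i hi).preimage_finCons t) fun _ => h _
    have hproj := sum_filter_nonempty_eq_zero_of_isPreconnected s _ c
      (fun i hi => (hconv i hi).isPreconnected.image _ (continuous_apply 0).continuousOn)
      (fun i hi => (hcpt i hi).image (continuous_apply 0)) hslice
    simpa only [Set.image_nonempty] using hproj

theorem convex_basePolytope_s11 {α : Type*} [Fintype α] (rk : Finset α → ℕ) :
    Convex ℝ (basePolytope rk) := by
  rintro x ⟨hx0, hx1, hx2⟩ y ⟨hy0, hy1, hy2⟩ a b ha hb hab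
  refine ⟨fun i => ?_, ?_, fun I => ?_⟩ <;>
    simp only [Pi.add_apply, Pi.smul_apply, smul_eq_mul, sum_add_distrib, ← mul_sum]
  · have := hx0 i; have := hy0 i; positivity
  · rw [hx1, hy1, ← add_mul, hab, one_mul]
  · calc a * ∑ i ∈ I, x i + b * ∑ i ∈ I, y i ≤ a * rk I + b * rk I := by
          gcongr
          exacts [hx2 I, hy2 I]
      _ = rk I := by rw [← add_mul, hab, one_mul]

theorem isCompact_basePolytope_s11 {α : Type*} [Fintype α] (rk : Finset α → ℕ) :
    IsCompact (basePolytope rk) := by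
  have hclosed : IsClosed (basePolytope rk) := by
    simp only [basePolytope, Set.ofPred_and, Set.ofPred_forall]
    exact (isClosed_iInter fun i => isClosed_le continuous_const (continuous_apply i)).inter
      ((isClosed_eq (by fun_prop) continuous_const).inter
        (isClosed_iInter fun I => isClosed_le (by fun_prop) continuous_const))
  refine (isCompact_univ_pi fun i => isCompact_Icc (a := 0) (b := (rk {i} : ℝ)))
    |>.of_isClosed_subset hclosed fun x hx i _ => ⟨hx.1 i, ?_⟩
  simpa using hx.2.2 {i}

theorem IsPolymatroid.basePolytope_nonempty {m : ℕ} {rk : Finset (Fin m) → ℕ}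
    (hP : IsPolymatroid rk) : (basePolytope rk).Nonempty := by
  obtain ⟨hempty, hmono, hsub⟩ := hP
  -- the greedy point `x_k = rk {j ≤ k} - rk {j < k}`
  let L : ℕ → Finset (Fin m) := fun n => {j | (j : ℕ) < n}
  let f : ℕ → ℝ := fun n => rk (L n)
  refine ⟨fun k => f (k + 1) - f k, fun k => ?_, ?_, fun I => ?_⟩
  · simp only [f, sub_nonneg, Nat.cast_le]
    exact hmono _ _ fun j => by simp only [L, mem_filter, mem_univ, true_and]; omega
  · rw [Fin.sum_univ_eq_sum_range (fun n => f (n + 1) - f n), sum_range_sub]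
    simp [f, L, hempty]
  · induction I using Finset.induction_on_max with
    | empty => simp [hempty]
    | insert a I hlt ih =>
      have hinter : insert a I ∩ L a = I := by
        ext j
        simp only [L, mem_inter, mem_insert, mem_filter, mem_univ, true_and]
        constructor
        · rintro ⟨rfl | hj, hja⟩
          exacts [absurd hja (lt_irrefl _), hj]
        · exact fun hj => ⟨Or.inr hj, hlt j hj⟩
      have hunion : insert a I ∪ L a = L (a + 1) := by
        ext j
        simp only [L, mem_union, mem_insert, mem_filter, mem_univ, true_and]
        constructor
        · rintro ((rfl | hj) | hja)
          exacts [Nat.lt_succ_self _, Nat.lt_succ_of_lt (hlt j hj), Nat.lt_succ_of_lt hja]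
        · intro hj
          rcases Nat.lt_succ_iff_lt_or_eq.1 hj with hja | hja
          exacts [Or.inr hja, Or.inl (Or.inl (Fin.ext hja))]
      have hsubmod := hsub (insert a I) (L a)
      rw [hinter, hunion] at hsubmod
      have hsubmod' : (rk I : ℝ) + f (a + 1) ≤ rk (insert a I) + f a := by
        simp only [f]
        exact_mod_cast hsubmod
      rw [sum_insert fun ha => (hlt a ha).false]
      linarith

theorem Finset.card_Ioc_lt_card_Ioc_of_mem {α : Type*} [Preorder α] [LocallyFiniteOrder α]
    {a b c : α} (hc : c ∈ Ioc a b) : #(Ioc c b) < #(Ioc a b) :=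
  card_lt_card
    ⟨Ioc_subset_Ioc_left (mem_Ioc.1 hc).1.le, fun h => lt_irrefl c (mem_Ioc.1 (h hc)).1⟩

theorem sum_filter_lt_rank_eq_zero {ι M : Type*} [Fintype ι] [AddCommMonoid M] {m : ℕ}
    (rk : ι → Finset (Fin m) → ℕ) (hP : ∀ i, IsPolymatroid (rk i)) (c : ι → M)
    (hval : ∀ x, ∑ i with x ∈ basePolytope (rk i), c i = 0) (t : ℕ) :
    ∑ i with t < rk i univ, c i = 0 := by
  have hhalf : ∀ x, ∑ i with t < rk i univ ∧ x ∈ basePolytope (rk i), c i = 0 := by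
    intro x
    by_cases hx : (t : ℝ) < ∑ j, x j
    · rw [← hval x]
      refine sum_congr (filter_congr fun i _ => ⟨And.right, fun hxi => ⟨?_, hxi⟩⟩) fun _ _ => rfl
      exact_mod_cast hxi.2.1 ▸ hx
    · refine sum_eq_zero fun i hi => absurd ?_ hx
      obtain ⟨hrk, hxi⟩ := (mem_filter.1 hi).2
      rw [hxi.2.1]
      exact_mod_cast hrk
  have heuler := sum_filter_nonempty_eq_zero_of_convex {i | t < rk i univ}
    (fun i => basePolytope (rk i)) c (fun i _ => convex_basePolytope_s11 _)
    (fun i _ => isCompact_basePolytope_s11 _) fun x => by rw [filter_filter]; exact hhalf x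
  rwa [filter_filter, filter_congr fun i _ => and_iff_left (hP i).basePolytope_nonempty] at heuler

theorem KnutsonCoeffs.eq_sub_sum_Ioc {m : ℕ} {a : Fin m → ℕ} {rk : Finset (Fin m) → ℕ}
    {c : (Fin m → ℕ) → ℤ} (hc : KnutsonCoeffs a rk c) {b : Fin m → ℕ} (hb : b ≤ a) :
    c b = (if (fun i => (b i : ℝ)) ∈ basePolytope rk then 1 else 0) +
      (if ∑ i, b i < rk univ then 1 else 0) - ∑ b' ∈ Ioc b a, c b' := by
  obtain ⟨hgt, heq, hlt⟩ := hc b hb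
  have hmem : (fun i => (b i : ℝ)) ∈ basePolytope rk → ∑ i, b i = rk univ := fun h => by
    have hsum : ∑ i, (b i : ℝ) = rk univ := h.2.1
    exact_mod_cast hsum
  have hupper : rk univ ≤ ∑ i, b i → ∑ b' ∈ Ioc b a, c b' = 0 := fun h =>
    sum_eq_zero fun b' hb' => (hc b' (mem_Ioc.1 hb').2).1
      (h.trans_lt (Fintype.sum_strictMono (mem_Ioc.1 hb').1))
  rcases lt_trichotomy (∑ i, b i) (rk univ) with h | h | h
  · rw [hlt h, if_neg fun hb => h.ne (hmem hb), if_pos h, zero_add]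
    congr 1
    refine finsum_cond_eq_sum_of_cond_iff c fun {b'} _ => ?_
    simp only [mem_Ioc, lt_iff_le_and_ne, Pi.le_def, forall_and, ne_comm]
    tauto
  · rw [heq h, if_neg (not_lt.2 h.ge), hupper h.ge]
    ring
  · rw [hgt h, if_neg fun hb => h.ne' (hmem hb), if_neg (lt_asymm h), hupper h.le]
    ring

theorem knutson_coefficient_is_valuative_general
    {m : ℕ} (a : Fin m → ℕ) (s : ℕ)
    (rk : Fin s → Finset (Fin m) → ℕ) (hP : ∀ i, IsPolymatroid (rk i))
    (cb : Fin s → (Fin m → ℕ) → ℤ) (hcb : ∀ i, KnutsonCoeffs a (rk i) (cb i))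
    (b : Fin m → ℕ) (hb : ∀ j, b j ≤ a j)
    (c : Fin s → ℤ)
    (hval : ∀ x : Fin m → ℝ,
      ∑ i, c i * Set.indicator (basePolytope (rk i)) (fun _ => (1 : ℤ)) x = 0) :
    ∑ i, c i * cb i b = 0 := by
  have hval' : ∀ x, ∑ i with x ∈ basePolytope (rk i), c i = 0 := fun x => by
    simpa only [Set.indicator_apply, mul_boole, ← sum_filter] using hval x
  induction hn : #(Ioc b a) using Nat.strong_induction_on generalizing b with
  | _ n ih =>
  have hupper : ∀ b' ∈ Ioc b a, ∑ i, c i * cb i b' = 0 := fun b' hb' =>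
    ih _ (hn ▸ card_Ioc_lt_card_Ioc_of_mem hb') b' (mem_Ioc.1 hb').2 rfl
  simp only [(hcb _).eq_sub_sum_Ioc hb, mul_sub, mul_add, mul_boole, sum_sub_distrib,
    sum_add_distrib, ← sum_filter, mul_sum]
  rw [sum_comm, hval', sum_filter_lt_rank_eq_zero rk hP c hval', sum_eq_zero hupper, sub_zero,
    add_zero]

/-- For each `b ≤ a`, the Knutson coefficient `c_b(P)` of a polymatroid `P` with cage `a` is a
valuative function of `P`. -/
theorem knutson_coefficient_is_valuative
    {m : ℕ} (hm : 1 ≤ m) (a : Fin m → ℕ) (s : ℕ)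
    (rk : Fin s → Finset (Fin m) → ℕ) (hP : ∀ i, IsPolymatroid (rk i))
    (hcage : ∀ i (j : Fin m), rk i {j} ≤ a j)
    (cb : Fin s → (Fin m → ℕ) → ℤ) (hcb : ∀ i, KnutsonCoeffs a (rk i) (cb i))
    (b : Fin m → ℕ) (hb : ∀ j, b j ≤ a j)
    (c : Fin s → ℤ)
    (hval : ∀ x : Fin m → ℝ,
      ∑ i, c i * Set.indicator (basePolytope (rk i)) (fun _ => (1 : ℤ)) x = 0) :
    ∑ i, c i * cb i b = 0 :=
  knutson_coefficient_is_valuative_general a s rk hP cb hcb b hb c hval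
end

section
/- Let M be a loopless matroid of rank r ≥ 1 with rank function rk_M on a finite ground set E, and let 𝒮 denote the set of nonempty subsets of E. Then the set D = {κ ∈ ℤ_{≥0}^{𝒮} : Σ_{S∈𝒮} κ_S = r−1, and rk_M(∪_{S∈I} S) ≥ 1 + Σ_{S∈I} κ_S for every nonempty finite I ⊆ 𝒮} is the set of lattice points of the base polytope of a polymatroid on 𝒮; that is, there exists a polymatroid Q on the finite set 𝒮 with B(Q) ∩ ℤ^{𝒮} = D. -/
open Finset

/-- The rank-function axioms of a matroid on a finite ground set: a matroid is a polymatroid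
with cage `(1, …, 1)`. -/
def IsMatroidRank {α : Type*} [Fintype α] [DecidableEq α] (rk : Finset α → ℕ) : Prop :=
  rk ∅ = 0 ∧ (∀ I J : Finset α, I ⊆ J → rk I ≤ rk J) ∧
    (∀ I J : Finset α, rk (I ∩ J) + rk (I ∪ J) ≤ rk I + rk J) ∧
    ∀ e : α, rk {e} ≤ 1

/-! The rank function of `Q` is the Dilworth truncation of `f(B) = rk(⋃ B) - 1`: the cheapest
`f`-cost of a cover of `I` by blocks. Looplessness makes `f` submodular on intersecting pairs.
Uncrossing (replacing crossing blocks `B, C` by `B ∩ C, B ∪ C`, which strictly increases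
`∑ |B|²`) turns the union of optimal covers of `I` and `J` into a laminar family whose maximal
blocks cover `I ∪ J` and whose other blocks cover `I ∩ J`, so the truncation is submodular.
An integer vector lies below the truncation iff it lies below `f`, and that is the dragon
Hall–Rado condition. -/

section DilworthTruncation

variable {γ : Type*} {f : Finset γ → ℕ} {I J : Finset γ}

def Covers (P : Multiset (Finset γ)) (I : Finset γ) : Prop :=
  ∀ x ∈ I, ∃ B ∈ P, x ∈ B

/-- The Dilworth truncation of `f`. Covers may repeat and overlap blocks; the minimum is
still attained by partitions when `f` is monotone. -/
noncomputable def minCoverCost (f : Finset γ → ℕ) (I : Finset γ) : ℕ :=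
  sInf {n | ∃ P : Multiset (Finset γ), Covers P I ∧ (P.map f).sum = n}

lemma covers_singleton_self (I : Finset γ) : Covers {I} I :=
  fun _ hx => ⟨I, Multiset.mem_singleton_self I, hx⟩

lemma minCoverCost_le {P : Multiset (Finset γ)} (h : Covers P I) :
    minCoverCost f I ≤ (P.map f).sum :=
  Nat.sInf_le ⟨P, h, rfl⟩

lemma exists_covers_sum_eq_minCoverCost (f : Finset γ → ℕ) (I : Finset γ) :
    ∃ P : Multiset (Finset γ), Covers P I ∧ (P.map f).sum = minCoverCost f I := by
  have hne : {n | ∃ P : Multiset (Finset γ), Covers P I ∧ (P.map f).sum = n}.Nonempty :=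
    ⟨_, {I}, covers_singleton_self I, rfl⟩
  exact Nat.sInf_mem hne

lemma minCoverCost_le_self : minCoverCost f I ≤ f I := by
  simpa using minCoverCost_le (f := f) (covers_singleton_self I)

lemma minCoverCost_empty : minCoverCost f ∅ = 0 :=
  Nat.eq_zero_of_le_zero <| by simpa using minCoverCost_le (f := f) (P := 0) (by simp [Covers])

lemma minCoverCost_mono (h : I ⊆ J) : minCoverCost f I ≤ minCoverCost f J := by
  obtain ⟨P, hP, hsum⟩ := exists_covers_sum_eq_minCoverCost f J
  exact hsum ▸ minCoverCost_le fun x hx => hP x (h hx)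

lemma le_minCoverCost_of_mem {x : γ} {m : ℕ} (hx : x ∈ I) (h : ∀ B, x ∈ B → m ≤ f B) :
    m ≤ minCoverCost f I := by
  obtain ⟨P, hP, hsum⟩ := exists_covers_sum_eq_minCoverCost f I
  obtain ⟨B, hB, hxB⟩ := hP x hx
  exact hsum ▸ (h B hxB).trans (Multiset.le_sum_of_mem (Multiset.mem_map_of_mem f hB))

variable [DecidableEq γ]

lemma sum_le_sum_map_sum_of_covers (κ : γ → ℕ) {P : Multiset (Finset γ)}
    (h : Covers P I) : ∑ x ∈ I, κ x ≤ (P.map fun B => ∑ x ∈ B, κ x).sum := by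
  induction P using Multiset.induction_on generalizing I with
  | empty =>
    obtain rfl : I = ∅ := eq_empty_of_forall_notMem fun x hx => by simpa using h x hx
    simp
  | cons B P ih =>
    rw [Multiset.map_cons, Multiset.sum_cons, ← sum_inter_add_sum_sdiff I B]
    refine add_le_add (sum_le_sum_of_subset inter_subset_right) (ih fun x hx => ?_)
    rw [mem_sdiff] at hx
    obtain ⟨C, hC, hxC⟩ := h x hx.1
    rcases Multiset.mem_cons.1 hC with rfl | hC
    exacts [(hx.2 hxC).elim, ⟨C, hC, hxC⟩]

lemma sum_le_minCoverCost_iff (κ : γ → ℕ) :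
    (∀ I, ∑ x ∈ I, κ x ≤ minCoverCost f I) ↔ ∀ B, ∑ x ∈ B, κ x ≤ f B := by
  refine ⟨fun h B => (h B).trans minCoverCost_le_self, fun h I => ?_⟩
  obtain ⟨P, hP, hsum⟩ := exists_covers_sum_eq_minCoverCost f I
  calc ∑ x ∈ I, κ x ≤ (P.map fun B => ∑ x ∈ B, κ x).sum := sum_le_sum_map_sum_of_covers κ hP
    _ ≤ (P.map f).sum := Multiset.sum_map_le_sum_map _ _ fun B _ => h B
    _ = minCoverCost f I := hsum

def IsLaminar (R : Multiset (Finset γ)) : Prop :=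
  ∀ B ∈ R, ∀ C ∈ R, (B ∩ C).Nonempty → B ⊆ C ∨ C ⊆ B

def IsIntersectingSubmodular (f : Finset γ → ℕ) : Prop :=
  ∀ B C : Finset γ, (B ∩ C).Nonempty → f (B ∩ C) + f (B ∪ C) ≤ f B + f C

/-- The maximal blocks of a laminar family are pairwise disjoint, so every point covered twice
is also covered by a non-maximal block. -/
lemma IsLaminar.exists_add_eq {R : Multiset (Finset γ)} (hR : IsLaminar R) :
    ∃ A A' : Multiset (Finset γ), A + A' = R ∧
      (∀ x, 1 ≤ R.countP (x ∈ ·) → ∃ B ∈ A, x ∈ B) ∧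
      (∀ x, 2 ≤ R.countP (x ∈ ·) → ∃ B ∈ A', x ∈ B) := by
  classical
  set maximals := R.toFinset.filter (Maximal (· ∈ R.toFinset))
  have hA : maximals.val ≤ R := by
    rw [filter_val]
    exact (Multiset.filter_le _ _).trans (Multiset.dedup_le R)
  refine ⟨maximals.val, R - maximals.val, add_tsub_cancel_of_le hA, fun x hx => ?_, fun x hx => ?_⟩
  · obtain ⟨B, hB, hxB⟩ := Multiset.countP_pos.1 hx
    obtain ⟨M, hBM, hM⟩ := exists_le_maximal R.toFinset (Multiset.mem_toFinset.2 hB)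
    exact ⟨M, mem_filter.2 ⟨hM.prop, hM⟩, hBM hxB⟩
  · have hmax : maximals.val.countP (x ∈ ·) ≤ 1 := by
      rw [Multiset.countP_eq_card_filter, ← filter_val, card_val]
      refine card_le_one.2 fun M hM N hN => ?_
      simp only [maximals, mem_filter] at hM hN
      rcases hR M (Multiset.mem_toFinset.1 hM.1.1) N (Multiset.mem_toFinset.1 hN.1.1)
        ⟨x, mem_inter.2 ⟨hM.2, hN.2⟩⟩ with h | h
      exacts [le_antisymm h (hM.1.2.2 hN.1.1 h), le_antisymm (hN.1.2.2 hM.1.1 h) h]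
    have hsplit := Multiset.countP_add (x ∈ ·) maximals.val (R - maximals.val)
    rw [add_tsub_cancel_of_le hA] at hsplit
    exact Multiset.countP_pos.1 (by omega)

lemma sq_card_add_sq_card_lt {B C : Finset γ} (hBC : ¬B ⊆ C) (hCB : ¬C ⊆ B) :
    #B ^ 2 + #C ^ 2 < #(B ∩ C) ^ 2 + #(B ∪ C) ^ 2 := by
  have hB : #(B ∩ C) < #B :=
    card_lt_card ⟨inter_subset_left, fun h => hBC (h.trans inter_subset_right)⟩
  have hC : #(B ∩ C) < #C :=
    card_lt_card ⟨inter_subset_right, fun h => hCB (h.trans inter_subset_left)⟩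
  have := card_inter_add_card_union B C
  nlinarith

lemma exists_uncross_step (hf : IsIntersectingSubmodular f)
    {R : Multiset (Finset γ)} (hR : ¬IsLaminar R) :
    ∃ R' : Multiset (Finset γ), (∀ x, R'.countP (x ∈ ·) = R.countP (x ∈ ·)) ∧
      R'.card = R.card ∧ (R.map fun B => #B ^ 2).sum < (R'.map fun B => #B ^ 2).sum ∧
      (R'.map f).sum ≤ (R.map f).sum := by
  simp only [IsLaminar, not_forall, not_or] at hR
  obtain ⟨B, hB, C, hC, hBC, hnBC, hnCB⟩ := hR
  have hCB : C ∈ R.erase B := (Multiset.mem_erase_of_ne fun h => hnCB h.le).2 hC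
  obtain ⟨rest, rfl⟩ : ∃ rest, R = B ::ₘ C ::ₘ rest :=
    ⟨(R.erase B).erase C, by rw [Multiset.cons_erase hCB, Multiset.cons_erase hB]⟩
  refine ⟨(B ∩ C) ::ₘ (B ∪ C) ::ₘ rest, fun x => ?_, by simp, ?_, ?_⟩
  · by_cases hxB : x ∈ B <;> by_cases hxC : x ∈ C <;> simp [hxB, hxC]
  · have := sq_card_add_sq_card_lt hnBC hnCB
    simp only [Multiset.map_cons, Multiset.sum_cons]
    omega
  · have := hf B C hBC
    simp only [Multiset.map_cons, Multiset.sum_cons]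
    omega

lemma exists_covers_of_countP [Fintype γ] (hf : IsIntersectingSubmodular f)
    {U V : Finset γ} (R : Multiset (Finset γ)) (hU : ∀ x ∈ U, 1 ≤ R.countP (x ∈ ·))
    (hV : ∀ x ∈ V, 2 ≤ R.countP (x ∈ ·)) :
    ∃ A A' : Multiset (Finset γ), Covers A U ∧ Covers A' V ∧
      (A.map f).sum + (A'.map f).sum ≤ (R.map f).sum := by
  induction hn : R.card * Fintype.card γ ^ 2 - (R.map fun B => #B ^ 2).sum
    using Nat.strong_induction_on generalizing R with
  | _ n ih =>
  by_cases hR : IsLaminar R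
  · obtain ⟨A, A', rfl, hA, hA'⟩ := hR.exists_add_eq
    exact ⟨A, A', fun x hx => hA x (hU x hx), fun x hx => hA' x (hV x hx), by simp⟩
  · obtain ⟨R', hcount, hcard, hsq, hcost⟩ := exists_uncross_step hf hR
    have hbound : (R'.map fun B => #B ^ 2).sum ≤ R.card * Fintype.card γ ^ 2 := by
      rw [← hcard]
      simpa using Multiset.sum_le_card_nsmul (R'.map fun B => #B ^ 2) (Fintype.card γ ^ 2)
        (by simpa using fun B _ => Nat.pow_le_pow_left (card_le_univ B) 2)
    obtain ⟨A, A', hA, hA', hle⟩ := ih _ (by rw [hcard]; omega) R'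
      (by simpa only [hcount] using hU) (by simpa only [hcount] using hV) rfl
    exact ⟨A, A', hA, hA', hle.trans hcost⟩

lemma minCoverCost_inter_add_union_le [Fintype γ] (hf : IsIntersectingSubmodular f)
    (I J : Finset γ) :
    minCoverCost f (I ∩ J) + minCoverCost f (I ∪ J) ≤ minCoverCost f I + minCoverCost f J := by
  obtain ⟨P, hP, hPsum⟩ := exists_covers_sum_eq_minCoverCost f I
  obtain ⟨Q, hQ, hQsum⟩ := exists_covers_sum_eq_minCoverCost f J
  have hcount : ∀ x, (x ∈ I → 1 ≤ P.countP (x ∈ ·)) ∧ (x ∈ J → 1 ≤ Q.countP (x ∈ ·)) :=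
    fun x => ⟨fun hx => Multiset.countP_pos.2 (hP x hx), fun hx => Multiset.countP_pos.2 (hQ x hx)⟩
  obtain ⟨A, A', hA, hA', hle⟩ := exists_covers_of_countP hf (U := I ∪ J) (V := I ∩ J) (P + Q)
    (fun x hx => by rw [Multiset.countP_add]; have := hcount x; grind)
    (fun x hx => by rw [Multiset.countP_add]; have := hcount x; grind)
  rw [Multiset.map_add, Multiset.sum_add, hPsum, hQsum] at hle
  have := minCoverCost_le (f := f) hA
  have := minCoverCost_le (f := f) hA'
  omega

lemma isPolymatroid_minCoverCost [Fintype γ] (hf : IsIntersectingSubmodular f) :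
    IsPolymatroid (minCoverCost f) :=
  ⟨minCoverCost_empty, fun _ _ => minCoverCost_mono, minCoverCost_inter_add_union_le hf⟩

end DilworthTruncation

lemma natCast_mem_basePolytope_iff {γ : Type*} [Fintype γ] (rk : Finset γ → ℕ) (κ : γ → ℕ) :
    (fun i => (κ i : ℝ)) ∈ basePolytope rk ↔
      ∑ i, κ i = rk univ ∧ ∀ I, ∑ i ∈ I, κ i ≤ rk I := by
  simp only [basePolytope, Set.mem_ofPred_eq, Nat.cast_nonneg, implies_true, true_and]
  norm_cast

lemma rk_biUnion_inter_add_rk_biUnion_union_le {ι α : Type*} [DecidableEq ι] [DecidableEq α]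
    {rk : Finset α → ℕ} (hmono : ∀ I J : Finset α, I ⊆ J → rk I ≤ rk J)
    (hsub : ∀ I J : Finset α, rk (I ∩ J) + rk (I ∪ J) ≤ rk I + rk J) (t : ι → Finset α)
    (B C : Finset ι) :
    rk ((B ∩ C).biUnion t) + rk ((B ∪ C).biUnion t) ≤ rk (B.biUnion t) + rk (C.biUnion t) := by
  have hinter : (B ∩ C).biUnion t ⊆ B.biUnion t ∩ C.biUnion t :=
    subset_inter (biUnion_subset_biUnion_of_subset_left t inter_subset_left)
      (biUnion_subset_biUnion_of_subset_left t inter_subset_right)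
  rw [union_biUnion]
  exact (Nat.add_le_add_right (hmono _ _ hinter) _).trans (hsub _ _)

lemma isIntersectingSubmodular_sub_one {γ : Type*} [DecidableEq γ] {g : Finset γ → ℕ}
    (hsub : ∀ B C : Finset γ, g (B ∩ C) + g (B ∪ C) ≤ g B + g C)
    (hpos : ∀ B : Finset γ, B.Nonempty → 1 ≤ g B) : IsIntersectingSubmodular fun B => g B - 1 := by
  intro B C hBC
  dsimp only
  have := hsub B C
  have := hpos _ hBC
  have := hpos _ (hBC.mono inter_subset_left)
  have := hpos _ (hBC.mono inter_subset_right)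
  have := hpos _ (hBC.mono (inter_subset_left.trans (subset_union_left (s₂ := C))))
  omega

section Dragon

variable {α : Type*} [DecidableEq α] {rk : Finset α → ℕ}

lemma one_le_rk_biUnion_val (hmono : ∀ I J : Finset α, I ⊆ J → rk I ≤ rk J)
    (hloopless : ∀ e : α, rk {e} = 1) {B : Finset {S : Finset α // S.Nonempty}}
    (hB : B.Nonempty) : 1 ≤ rk (B.biUnion Subtype.val) := by
  obtain ⟨S, hS⟩ := hB
  obtain ⟨e, he⟩ := S.2
  exact hloopless e ▸ hmono _ _ (singleton_subset_iff.2 (mem_biUnion.2 ⟨S, hS, he⟩))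

lemma minCoverCost_rk_biUnion_val_univ [Fintype α] (hrk0 : rk ∅ = 0)
    (hmono : ∀ I J : Finset α, I ⊆ J → rk I ≤ rk J) :
    minCoverCost (fun B : Finset {S : Finset α // S.Nonempty} => rk (B.biUnion Subtype.val) - 1)
      univ = rk univ - 1 := by
  have huniv : (univ : Finset {S : Finset α // S.Nonempty}).biUnion Subtype.val = univ :=
    eq_univ_of_forall fun e =>
      mem_biUnion.2 ⟨⟨{e}, singleton_nonempty e⟩, mem_univ _, mem_singleton_self e⟩
  refine le_antisymm (huniv ▸ minCoverCost_le_self) ?_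
  rcases (univ : Finset α).eq_empty_or_nonempty with hα | hα
  · simp [hα, hrk0]
  · refine le_minCoverCost_of_mem (mem_univ ⟨univ, hα⟩) fun B hB => ?_
    have := hmono univ (B.biUnion Subtype.val) fun e _ => mem_biUnion.2 ⟨_, hB, mem_univ e⟩
    omega

end Dragon

theorem dragon_hall_rado_polymatroid_exists_general
    {α : Type} [Fintype α] [DecidableEq α] {r : ℕ}
    (rk : Finset α → ℕ) (hM : IsMatroidRank rk) (hloopless : ∀ e : α, rk {e} = 1)
    (hrank : rk Finset.univ = r) :
    ∃ rkQ : Finset {S : Finset α // S.Nonempty} → ℕ, IsPolymatroid rkQ ∧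
      ∀ κ : {S : Finset α // S.Nonempty} → ℕ,
        ((fun S => (κ S : ℝ)) ∈ basePolytope rkQ ↔
          ((∑ S, κ S = r - 1) ∧
            ∀ I : Finset {S : Finset α // S.Nonempty}, I.Nonempty →
              1 + ∑ S ∈ I, κ S ≤ rk (I.biUnion Subtype.val))) := by
  obtain ⟨hrk0, hmono, hsub, -⟩ := hM
  have hpos := fun B (hB : Finset.Nonempty B) => one_le_rk_biUnion_val hmono hloopless hB
  have hf := isIntersectingSubmodular_sub_one
    (rk_biUnion_inter_add_rk_biUnion_union_le hmono hsub Subtype.val) hpos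
  refine ⟨_, isPolymatroid_minCoverCost hf, fun κ => ?_⟩
  rw [natCast_mem_basePolytope_iff, minCoverCost_rk_biUnion_val_univ hrk0 hmono, hrank,
    sum_le_minCoverCost_iff]
  refine and_congr_right' (forall_congr' fun I => ?_)
  rcases I.eq_empty_or_nonempty with rfl | hI
  · simp
  · have := hpos I hI
    simp only [hI, true_implies]
    omega

/-- For a loopless matroid `M` of rank `r ≥ 1`, the set of tuples `κ ∈ ℤ_{≥0}^{𝒮}` (indexed by
the nonempty subsets `𝒮` of the ground set) with `Σ κ_S = r - 1` satisfying the dragon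
Hall–Rado condition is the set of lattice points of the base polytope of a polymatroid on
`𝒮`: the dragon-Hall–Rado polymatroid of `M`. -/
theorem dragon_hall_rado_polymatroid_exists
    {α : Type} [Fintype α] [DecidableEq α] {r : ℕ}
    (rk : Finset α → ℕ) (hM : IsMatroidRank rk) (hloopless : ∀ e : α, rk {e} = 1)
    (hrank : rk Finset.univ = r) (hr : 1 ≤ r) :
    ∃ rkQ : Finset {S : Finset α // S.Nonempty} → ℕ, IsPolymatroid rkQ ∧
      ∀ κ : {S : Finset α // S.Nonempty} → ℕ,
        ((fun S => (κ S : ℝ)) ∈ basePolytope rkQ ↔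
          ((∑ S, κ S = r - 1) ∧
            ∀ I : Finset {S : Finset α // S.Nonempty}, I.Nonempty →
              1 + ∑ S ∈ I, κ S ≤ rk (I.biUnion Subtype.val))) :=
  dragon_hall_rado_polymatroid_exists_general rk hM hloopless hrank
end

section
/- Let M be a loopless matroid with rank function rk_M on a finite ground set E = [n], and let M* be its dual matroid, with rank function rk_{M*}(S) = |S| − rk_M(E) + rk_M(E∖S). Then the following identity holds in the Chow ring A(M): Σ_{F nonempty flat of M} (rk_{M*}(E∖F) − rk_{M*}(E))·z_F = Σ_{F} c_F·h_F, where the right-hand sum is over connected flats F of M with rk_M(F) ≥ 2, c_F = Σ_{S ⊆ E with cl_M(S) = F} (−1)^{|S| − rk_M(S) + 1}·β(M|_S), cl_M denotes the closure operator of M, M|_S denotes the restriction of M to S, and β is Crapo's β-invariant. -/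
open Finset

attribute [local instance] Classical.propDecidable

/-- A flat of a matroid: a subset closed under the closure operator. -/
def IsFlat {α : Type*} [Fintype α] [DecidableEq α] (rk : Finset α → ℕ) (F : Finset α) : Prop :=
  ∀ e : α, rk (insert e F) = rk F → e ∈ F

/-- The closure of a subset in a matroid. -/
def matroidCl {α : Type*} [Fintype α] [DecidableEq α] (rk : Finset α → ℕ) (S : Finset α) :
    Finset α :=
  Finset.univ.filter fun e => rk (insert e S) = rk S

/-- The restriction `M|S` is a connected matroid: `S` is nonempty and admits no separation
`S = A ⊔ (S∖A)` into nonempty parts with `rk A + rk (S∖A) = rk S`. -/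
def IsConnRes {α : Type*} [Fintype α] [DecidableEq α] (rk : Finset α → ℕ) (S : Finset α) :
    Prop :=
  S.Nonempty ∧ ∀ A ⊆ S, A.Nonempty → A ≠ S → rk A + rk (S \ A) ≠ rk S

/-- Crapo's beta invariant of the restriction `M|S`:
`β(M|S) = (-1)^{rk S} Σ_{T ⊆ S} (-1)^{|T|} rk T`. -/
def betaRes {α : Type*} [Fintype α] [DecidableEq α] (rk : Finset α → ℕ) (S : Finset α) : ℤ :=
  (-1) ^ rk S * ∑ T ∈ S.powerset, (-1) ^ T.card * (rk T : ℤ)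

/-- The rank function of the dual matroid, `rk_{M*}(S) = |S| - rk(E) + rk(E ∖ S)`. -/
def rkDual {α : Type*} [Fintype α] [DecidableEq α] (rk : Finset α → ℕ) (S : Finset α) : ℤ :=
  (S.card : ℤ) - (rk Finset.univ : ℤ) + (rk (Finset.univ \ S) : ℤ)

/-- The nonempty flats of a matroid, indexing the Chow ring generators `z_F`. -/
def NonemptyFlat {α : Type*} [Fintype α] [DecidableEq α] (rk : Finset α → ℕ) : Type _ :=
  {F : Finset α // F.Nonempty ∧ IsFlat rk F}

noncomputable instance {α : Type*} [Fintype α] [DecidableEq α] (rk : Finset α → ℕ) :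
    Fintype (NonemptyFlat rk) :=
  Fintype.ofFinite {F : Finset α // F.Nonempty ∧ IsFlat rk F}

/-- The defining ideal of the Chow ring `A(M)` of a matroid: generated by the products
`z_F z_{F'}` over incomparable pairs of nonempty flats, and the linear forms `Σ_{F ∋ i} z_F`
for ground set elements `i`. -/
noncomputable def chowIdealZ {α : Type*} [Fintype α] [DecidableEq α] (rk : Finset α → ℕ) :
    Ideal (MvPolynomial (NonemptyFlat rk) ℤ) :=
  Ideal.span
    ({p | ∃ F F' : NonemptyFlat rk, ¬F.1 ⊆ F'.1 ∧ ¬F'.1 ⊆ F.1 ∧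
        p = MvPolynomial.X F * MvPolynomial.X F'} ∪
      {p | ∃ i : α,
        p = ∑ F : NonemptyFlat rk, if i ∈ F.1 then MvPolynomial.X F else 0})

/-- The simplicial class `h_S = -Σ_{F ⊇ S} z_F`, as a polynomial representative. -/
noncomputable def hPolyZ {α : Type*} [Fintype α] [DecidableEq α] (rk : Finset α → ℕ)
    (S : Finset α) : MvPolynomial (NonemptyFlat rk) ℤ :=
  -∑ F : NonemptyFlat rk, if S ⊆ F.1 then MvPolynomial.X F else 0

/-!
Expanding `h_F = -Σ_{G ⊇ F} z_G`, the coefficient of `z_G` on the right-hand side is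
`-Σ_{F ⊆ G} c_F`, and grouping the sets `S` by their closure turns `Σ_{F ⊆ G} c_F` into a sum
over the subsets `S ⊆ G` of rank at least two whose closure is connected. Since `β` vanishes on
disconnected matroids and the closure of a connected set is connected, the connectivity
condition can be dropped. Möbius inversion on the Boolean lattice shows that the sum over all
`S ⊆ G` is `-rk G`, while the sets of rank one contribute minus the number `a(G)` of rank-one
flats inside `G`. So the two sides differ, coefficientwise, by `a(G) - |G| = Σ_{i ∈ G} (δ_i - 1)`,
where `δ` is the indicator of a choice of one element in each rank-one flat; that difference is
`Σ_i (δ_i - 1) Σ_{F ∋ i} z_F`, which lies in the ideal.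
-/

section AlternatingSum

variable {α β : Type*} [DecidableEq α] [CommRing β]

lemma sum_powerset_neg_one_pow_card_mul_eq_zero {S : Finset α} {e : α} (he : e ∈ S)
    {g : Finset α → β} (hg : ∀ T ⊆ S.erase e, g (insert e T) = g T) :
    ∑ T ∈ S.powerset, (-1) ^ #T * g T = 0 := by
  rw [← insert_erase he, sum_powerset_insert (notMem_erase e S), ← sum_add_distrib]
  refine sum_eq_zero fun T hT => ?_
  rw [card_insert_of_notMem fun h => notMem_erase e S (mem_powerset.1 hT h),
    hg T (mem_powerset.1 hT), pow_succ]
  ring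

/-- Möbius inversion on the Boolean lattice of subsets of `G`. -/
lemma sum_powerset_neg_one_pow_card_mul_sum_powerset (f : Finset α → β) (G : Finset α) :
    ∑ T ∈ G.powerset, (-1) ^ #T * ∑ R ∈ T.powerset, (-1) ^ #R * f R = f G := by
  induction G using Finset.induction_on generalizing f with
  | empty => simp
  | @insert a G ha ih =>
    rw [sum_powerset_insert ha, ← ih (fun R => f (insert a R)), ← sum_add_distrib]
    refine sum_congr rfl fun T hT => ?_
    have haT : a ∉ T := fun h => ha (mem_powerset.1 hT h)
    have hsign : ∀ R ∈ T.powerset,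
        (-1) ^ #(insert a R) * f (insert a R) = -((-1) ^ #R * f (insert a R)) := fun R hR => by
      rw [card_insert_of_notMem fun h => haT (mem_powerset.1 hR h), pow_succ]
      ring
    rw [sum_powerset_insert haT, card_insert_of_notMem haT, sum_congr rfl hsign,
      sum_neg_distrib, pow_succ]
    ring

end AlternatingSum

section Matroid

variable {α : Type*} [Fintype α] [DecidableEq α] {rk : Finset α → ℕ}

lemma mem_matroidCl {S : Finset α} {e : α} : e ∈ matroidCl rk S ↔ rk (insert e S) = rk S := by
  simp [matroidCl]

lemma subset_matroidCl (S : Finset α) : S ⊆ matroidCl rk S := fun e he =>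
  mem_matroidCl.2 (by rw [insert_eq_of_mem he])

namespace IsMatroidRank

lemma rk_empty (hM : IsMatroidRank rk) : rk ∅ = 0 := hM.1

lemma mono (hM : IsMatroidRank rk) {I J : Finset α} (h : I ⊆ J) : rk I ≤ rk J := hM.2.1 I J h

lemma submod (hM : IsMatroidRank rk) (I J : Finset α) :
    rk (I ∩ J) + rk (I ∪ J) ≤ rk I + rk J :=
  hM.2.2.1 I J

lemma rk_singleton_le (hM : IsMatroidRank rk) (e : α) : rk {e} ≤ 1 := hM.2.2.2 e

lemma rk_le_card (hM : IsMatroidRank rk) (S : Finset α) : rk S ≤ #S := by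
  induction S using Finset.induction_on with
  | empty => simp [hM.rk_empty]
  | @insert e S he ih =>
    have := hM.submod {e} S
    rw [singleton_inter_of_notMem he, hM.rk_empty, ← insert_eq] at this
    have := hM.rk_singleton_le e
    rw [card_insert_of_notMem he]
    omega

lemma one_le_rk (hM : IsMatroidRank rk) (hl : ∀ e : α, rk {e} = 1) {S : Finset α}
    (hS : S.Nonempty) : 1 ≤ rk S := by
  obtain ⟨e, he⟩ := hS
  exact hl e ▸ hM.mono (singleton_subset_iff.2 he)

lemma rk_eq_zero_iff (hM : IsMatroidRank rk) (hl : ∀ e : α, rk {e} = 1) {S : Finset α} :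
    rk S = 0 ↔ S = ∅ := by
  refine ⟨fun h => not_nonempty_iff_eq_empty.1 fun hS => ?_, fun h => h ▸ hM.rk_empty⟩
  have := hM.one_le_rk hl hS
  omega

lemma rk_union_eq_of_subset_matroidCl (hM : IsMatroidRank rk) {S T : Finset α}
    (h : T ⊆ matroidCl rk S) : rk (S ∪ T) = rk S := by
  induction T using Finset.induction_on with
  | empty => simp
  | @insert e T _ ih =>
    have he := mem_matroidCl.1 (h (mem_insert_self e T))
    have hT := ih ((subset_insert e T).trans h)
    have := hM.submod (insert e S) (S ∪ T)
    have := hM.mono (show S ⊆ insert e S ∩ (S ∪ T) by grind)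
    have := hM.mono (show S ∪ T ⊆ S ∪ insert e T by grind)
    rw [show insert e S ∪ (S ∪ T) = S ∪ insert e T by grind] at *
    omega

lemma rk_matroidCl (hM : IsMatroidRank rk) (S : Finset α) : rk (matroidCl rk S) = rk S := by
  simpa [union_eq_right.2 (subset_matroidCl S)] using
    hM.rk_union_eq_of_subset_matroidCl (subset_refl (matroidCl rk S))

lemma isFlat_matroidCl (hM : IsMatroidRank rk) (S : Finset α) : IsFlat rk (matroidCl rk S) := by
  intro e he
  rw [hM.rk_matroidCl] at he
  have := hM.mono (subset_insert e S)
  have := hM.mono (insert_subset_insert e (subset_matroidCl (rk := rk) S))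
  exact mem_matroidCl.2 (by omega)

lemma matroidCl_subset_of_isFlat (hM : IsMatroidRank rk) {S G : Finset α} (hG : IsFlat rk G)
    (h : S ⊆ G) : matroidCl rk S ⊆ G := by
  intro e he
  have he := mem_matroidCl.1 he
  have := hM.submod (insert e S) G
  have := hM.mono (show S ⊆ insert e S ∩ G by grind)
  have := hM.mono (subset_insert e G)
  rw [show insert e S ∪ G = insert e G by grind] at *
  exact hG e (by omega)

lemma matroidCl_eq_of_rk_eq_one (hM : IsMatroidRank rk) (hl : ∀ e : α, rk {e} = 1)
    {P T : Finset α} (hP : IsFlat rk P) (hP1 : rk P = 1) (hTP : T ⊆ P) (hT : T.Nonempty) :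
    matroidCl rk T = P := by
  refine (hM.matroidCl_subset_of_isFlat hP hTP).antisymm fun e he => mem_matroidCl.2 ?_
  have := hM.mono hTP
  have := hM.mono (insert_subset he hTP)
  have := hM.mono (subset_insert e T)
  have := hM.one_le_rk hl hT
  omega

/-- Two submodularity inequalities, against `A` and against `S \ A`, show that a separator
`A` of `S` also separates every subset of `S`. -/
lemma rk_inter_add_rk_sdiff_of_separator (hM : IsMatroidRank rk) {S A T : Finset α}
    (hA : A ⊆ S) (hT : T ⊆ S) (hsep : rk A + rk (S \ A) = rk S) :
    rk (T ∩ A) + rk (T \ A) = rk T := by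
  have h₁ := hM.submod A (T ∩ A ∪ S \ A)
  rw [show A ∩ (T ∩ A ∪ S \ A) = T ∩ A by grind, show A ∪ (T ∩ A ∪ S \ A) = S by grind] at h₁
  have h₂ := hM.submod T (S \ A)
  rw [show T ∩ (S \ A) = T \ A by grind, show T ∪ S \ A = T ∩ A ∪ S \ A by grind] at h₂
  have h₃ := hM.submod (T ∩ A) (T \ A)
  rw [show T ∩ A ∩ (T \ A) = ∅ by grind, show T ∩ A ∪ T \ A = T by grind, hM.rk_empty] at h₃
  omega

lemma isConnRes_matroidCl (hM : IsMatroidRank rk) (hl : ∀ e : α, rk {e} = 1) {S : Finset α}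
    (hS : IsConnRes rk S) : IsConnRes rk (matroidCl rk S) := by
  refine ⟨hS.1.mono (subset_matroidCl S), fun A hA hAne hAS hsep => ?_⟩
  -- The traces on `S` of the two sides of the separation have full rank, so are nonempty.
  have hsplit := hM.rk_inter_add_rk_sdiff_of_separator hA (subset_matroidCl S) hsep
  have hrk := hM.rk_matroidCl S
  have hle₁ := hM.mono (inter_subset_right : S ∩ A ⊆ A)
  have hle₂ := hM.mono (sdiff_subset_sdiff (subset_matroidCl (rk := rk) S) (subset_refl A))
  have hpos₁ := hM.one_le_rk hl hAne
  have hpos₂ := hM.one_le_rk hl (sdiff_nonempty.2 fun h => hAS (hA.antisymm h))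
  have hSA₁ : S ∩ A ≠ ∅ := fun h => by rw [h, hM.rk_empty] at hsplit; omega
  have hSA₂ : S \ A ≠ ∅ := fun h => by rw [h, hM.rk_empty] at hsplit; omega
  refine hS.2 (S ∩ A) inter_subset_left (nonempty_iff_ne_empty.2 hSA₁) (fun h => hSA₂ ?_) ?_
  · rw [← h]; grind
  · rwa [sdiff_inter_self_left]

end IsMatroidRank

lemma betaRes_empty (hM : IsMatroidRank rk) : betaRes rk ∅ = 0 := by
  simp [betaRes, hM.rk_empty]

lemma betaRes_eq_zero_of_not_isConnRes (hM : IsMatroidRank rk) {S : Finset α}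
    (hS : ¬IsConnRes rk S) : betaRes rk S = 0 := by
  rcases S.eq_empty_or_nonempty with rfl | hne
  · exact betaRes_empty hM
  simp only [IsConnRes, hne, true_and, not_forall, not_not] at hS
  obtain ⟨A, hA, ⟨a, haA⟩, hAS, hsep⟩ := hS
  obtain ⟨e, heS, heA⟩ := not_subset.1 fun h => hAS (hA.antisymm h)
  have hsplit : ∑ T ∈ S.powerset, (-1 : ℤ) ^ #T * (rk T : ℤ) =
      ∑ T ∈ S.powerset, (-1) ^ #T * (rk (T ∩ A) : ℤ) +
        ∑ T ∈ S.powerset, (-1) ^ #T * (rk (T \ A) : ℤ) := by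
    rw [← sum_add_distrib]
    refine sum_congr rfl fun T hT => ?_
    rw [← mul_add, ← Nat.cast_add,
      hM.rk_inter_add_rk_sdiff_of_separator hA (mem_powerset.1 hT) hsep]
  rw [betaRes, hsplit,
    sum_powerset_neg_one_pow_card_mul_eq_zero heS fun T _ => by rw [insert_inter_of_notMem heA],
    sum_powerset_neg_one_pow_card_mul_eq_zero (hA haA) fun T _ => by
      rw [insert_sdiff_of_mem _ haA]]
  simp

def signedBeta (rk : Finset α → ℕ) (S : Finset α) : ℤ :=
  (-1) ^ (#S - rk S + 1) * betaRes rk S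

lemma signedBeta_eq (hM : IsMatroidRank rk) (S : Finset α) :
    signedBeta rk S = -((-1) ^ #S * ∑ T ∈ S.powerset, (-1) ^ #T * (rk T : ℤ)) := by
  have hexp : #S - rk S + 1 + rk S = #S + 1 := by have := hM.rk_le_card S; omega
  rw [signedBeta, betaRes, ← mul_assoc, ← pow_add, hexp, pow_succ]
  ring

lemma sum_powerset_signedBeta (hM : IsMatroidRank rk) (G : Finset α) :
    ∑ S ∈ G.powerset, signedBeta rk S = -rk G := by
  simp only [signedBeta_eq hM, sum_neg_distrib,
    sum_powerset_neg_one_pow_card_mul_sum_powerset (fun T => (rk T : ℤ))]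

lemma signedBeta_of_rk_eq_one (hM : IsMatroidRank rk) (hl : ∀ e : α, rk {e} = 1)
    {S : Finset α} (h1 : rk S = 1) : signedBeta rk S = (-1) ^ #S := by
  have hS : S.Nonempty := nonempty_iff_ne_empty.2 fun h => by simp [h, hM.rk_empty] at h1
  have hterm : ∀ T ∈ S.powerset,
      (-1 : ℤ) ^ #T * (rk T : ℤ) = (-1) ^ #T - if T = ∅ then 1 else 0 := by
    intro T hT
    split_ifs with hT0
    · simp [hT0, hM.rk_empty]
    · have := hM.mono (mem_powerset.1 hT)
      have := hM.one_le_rk hl (nonempty_iff_ne_empty.2 hT0)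
      rw [show rk T = 1 by omega]
      simp
  rw [signedBeta_eq hM, sum_congr rfl hterm, sum_sub_distrib,
    sum_powerset_neg_one_pow_card_of_nonempty hS, sum_ite_eq' _ _ (fun _ => (1 : ℤ)),
    if_pos (empty_mem_powerset S)]
  ring

lemma signedBeta_eq_zero_of_not_isConnRes_matroidCl (hM : IsMatroidRank rk)
    (hl : ∀ e : α, rk {e} = 1) {S : Finset α} (hS : ¬IsConnRes rk (matroidCl rk S)) :
    signedBeta rk S = 0 := by
  rw [signedBeta, betaRes_eq_zero_of_not_isConnRes hM (mt (hM.isConnRes_matroidCl hl) hS),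
    mul_zero]

lemma sum_rk_eq_one_neg_one_pow_card (hM : IsMatroidRank rk) (hl : ∀ e : α, rk {e} = 1)
    {G : Finset α} (hG : IsFlat rk G) :
    ∑ T ∈ G.powerset with rk T = 1, (-1 : ℤ) ^ #T =
      -#{P ∈ G.powerset | IsFlat rk P ∧ rk P = 1} := by
  have hcl : ∀ T ∈ {T ∈ G.powerset | rk T = 1},
      matroidCl rk T ∈ {P ∈ G.powerset | IsFlat rk P ∧ rk P = 1} := by
    simp only [mem_filter, mem_powerset]
    exact fun T hT => ⟨hM.matroidCl_subset_of_isFlat hG hT.1, hM.isFlat_matroidCl T,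
      (hM.rk_matroidCl T).trans hT.2⟩
  rw [← sum_fiberwise_of_maps_to hcl, card_eq_sum_ones, Nat.cast_sum, ← sum_neg_distrib]
  refine sum_congr rfl fun P hP => ?_
  simp only [mem_filter, mem_powerset] at hP
  obtain ⟨hPG, hPf, hP1⟩ := hP
  have hPne : P.Nonempty := nonempty_iff_ne_empty.2 fun h => by simp [h, hM.rk_empty] at hP1
  have hfiber : {T ∈ {T ∈ G.powerset | rk T = 1} | matroidCl rk T = P} = P.powerset.erase ∅ := by
    ext T
    simp only [mem_filter, mem_powerset, mem_erase]
    constructor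
    · rintro ⟨⟨-, hT1⟩, rfl⟩
      exact ⟨fun h => by simp [h, hM.rk_empty] at hT1, subset_matroidCl T⟩
    · rintro ⟨hT0, hTP⟩
      have hT := nonempty_iff_ne_empty.2 hT0
      have := hM.mono hTP
      have := hM.one_le_rk hl hT
      exact ⟨⟨hTP.trans hPG, by omega⟩, hM.matroidCl_eq_of_rk_eq_one hl hPf hP1 hTP hT⟩
  have hsum := sum_erase_add P.powerset (fun T => (-1 : ℤ) ^ #T) (empty_mem_powerset P)
  rw [sum_powerset_neg_one_pow_card_of_nonempty hPne, card_empty, pow_zero] at hsum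
  rw [hfiber, Nat.cast_one]
  linarith

/-- `parallelRep rk i` depends on `i` only through the flat `cl {i}`, so the fixed points of
`parallelRep rk` contain exactly one element of each rank-one flat. -/
noncomputable def parallelRep (rk : Finset α → ℕ) (i : α) : α :=
  (⟨i, subset_matroidCl {i} (mem_singleton_self i)⟩ : (matroidCl rk {i}).Nonempty).choose

lemma parallelRep_eq_choose {i : α} {P : Finset α} (h : matroidCl rk {i} = P)
    (hP : P.Nonempty) : parallelRep rk i = hP.choose := by
  subst h
  rfl

lemma card_filter_parallelRep_eq (hM : IsMatroidRank rk) (hl : ∀ e : α, rk {e} = 1)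
    {G : Finset α} (hG : IsFlat rk G) :
    #{i ∈ G | parallelRep rk i = i} = #{P ∈ G.powerset | IsFlat rk P ∧ rk P = 1} := by
  refine card_bij (fun i _ => matroidCl rk {i}) (fun i hi => ?_) (fun i hi j hj hij => ?_)
    (fun P hP => ?_)
  · simp only [mem_filter, mem_powerset] at hi ⊢
    exact ⟨hM.matroidCl_subset_of_isFlat hG (singleton_subset_iff.2 hi.1),
      hM.isFlat_matroidCl {i}, (hM.rk_matroidCl {i}).trans (hl i)⟩
  · simp only [mem_filter] at hi hj
    rw [← hi.2, ← hj.2, parallelRep_eq_choose hij ⟨j, subset_matroidCl {j} (mem_singleton_self j)⟩]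
    rfl
  · simp only [mem_filter, mem_powerset] at hP ⊢
    obtain ⟨hPG, hPf, hP1⟩ := hP
    have hPne : P.Nonempty := nonempty_iff_ne_empty.2 fun h => by simp [h, hM.rk_empty] at hP1
    have hclP : matroidCl rk {hPne.choose} = P := hM.matroidCl_eq_of_rk_eq_one hl hPf hP1
      (singleton_subset_iff.2 hPne.choose_spec) (singleton_nonempty _)
    exact ⟨hPne.choose, ⟨hPG hPne.choose_spec, parallelRep_eq_choose hclP hPne⟩, hclP⟩

lemma sum_nonemptyFlat_sum_matroidCl_eq_sum_powerset {β : Type*} [AddCommMonoid β]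
    (hM : IsMatroidRank rk) {G : Finset α} (hG : IsFlat rk G) (p : Finset α → Prop)
    [DecidablePred p] (hp : ∀ F, p F → F.Nonempty) (f : Finset α → β) :
    ∑ F ∈ univ.filter (fun F : NonemptyFlat rk => p F.1 ∧ F.1 ⊆ G),
        ∑ T ∈ univ.powerset.filter (fun T => matroidCl rk T = F.1), f T =
      ∑ T ∈ G.powerset with p (matroidCl rk T), f T := by
  have hmaps : ∀ T ∈ {T ∈ G.powerset | p (matroidCl rk T)}, matroidCl rk T ∈
      (univ.filter fun F : NonemptyFlat rk => p F.1 ∧ F.1 ⊆ G).map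
        ⟨fun F : NonemptyFlat rk => F.1, Subtype.val_injective⟩ := by
    intro T hT
    simp only [mem_filter, mem_powerset] at hT
    exact mem_map.2 ⟨⟨matroidCl rk T, hp _ hT.2, hM.isFlat_matroidCl T⟩,
      mem_filter.2 ⟨mem_univ _, hT.2, hM.matroidCl_subset_of_isFlat hG hT.1⟩, rfl⟩
  rw [← sum_fiberwise_of_maps_to hmaps, sum_map]
  refine sum_congr rfl fun F hF => sum_congr ?_ fun _ _ => rfl
  simp only [mem_filter, mem_univ, true_and] at hF
  ext T
  simp only [mem_filter, mem_powerset, subset_univ, true_and]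
  exact ⟨fun h => ⟨⟨(subset_matroidCl T).trans (h ▸ hF.2), h ▸ hF.1⟩, h⟩, fun h => h.2⟩

lemma sum_connected_flats_sum_signedBeta (hM : IsMatroidRank rk) (hl : ∀ e : α, rk {e} = 1)
    {G : Finset α} (hG : IsFlat rk G) :
    ∑ F ∈ univ.filter
        (fun F : NonemptyFlat rk => (2 ≤ rk F.1 ∧ IsConnRes rk F.1) ∧ F.1 ⊆ G),
        ∑ T ∈ univ.powerset.filter (fun T => matroidCl rk T = F.1), signedBeta rk T =
      #{i ∈ G | parallelRep rk i = i} - rk G := by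
  refine (sum_nonemptyFlat_sum_matroidCl_eq_sum_powerset hM hG (fun F => 2 ≤ rk F ∧ IsConnRes rk F)
    (fun F hF => hF.2.1) (signedBeta rk)).trans ?_
  have hconn : ∑ T ∈ G.powerset with 2 ≤ rk (matroidCl rk T) ∧ IsConnRes rk (matroidCl rk T),
      signedBeta rk T = ∑ T ∈ G.powerset with 2 ≤ rk T, signedBeta rk T := by
    rw [sum_filter, sum_filter]
    refine sum_congr rfl fun T _ => ?_
    rw [hM.rk_matroidCl]
    by_cases hc : IsConnRes rk (matroidCl rk T)
    · simp [hc]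
    · simp [hc, signedBeta_eq_zero_of_not_isConnRes_matroidCl hM hl hc]
  have hsmall : ∑ T ∈ G.powerset with ¬2 ≤ rk T, signedBeta rk T =
      ∑ T ∈ G.powerset with rk T = 1, (-1 : ℤ) ^ #T := by
    rw [sum_filter, sum_filter]
    refine sum_congr rfl fun T _ => ?_
    obtain h | h | h : rk T = 0 ∨ rk T = 1 ∨ 2 ≤ rk T := by omega
    · simp [(hM.rk_eq_zero_iff hl).1 h, hM.rk_empty, signedBeta, betaRes_empty hM]
    · simp [h, signedBeta_of_rk_eq_one hM hl h]
    · simp [h, show rk T ≠ 1 by omega]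
  have htotal := sum_filter_add_sum_filter_not G.powerset (fun T => 2 ≤ rk T) (signedBeta rk)
  rw [sum_powerset_signedBeta hM, hsmall, sum_rk_eq_one_neg_one_pow_card hM hl hG,
    ← card_filter_parallelRep_eq hM hl hG] at htotal
  exact hconn.trans (by linarith)

lemma sum_smul_hPolyZ (s : Finset (NonemptyFlat rk)) (c : NonemptyFlat rk → ℤ) :
    ∑ F ∈ s, c F • hPolyZ rk F.1 =
      ∑ G : NonemptyFlat rk, (-∑ F ∈ s with F.1 ⊆ G.1, c F) • MvPolynomial.X G := by
  simp only [hPolyZ, smul_neg, smul_sum, smul_ite, smul_zero, sum_neg_distrib, neg_smul,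
    sum_smul, sum_filter, ite_smul, zero_smul]
  rw [sum_comm]

variable (rk) in
lemma sum_sum_smul_X_mem_chowIdealZ (a : α → ℤ) :
    ∑ G : NonemptyFlat rk, (∑ i ∈ G.1, a i) • MvPolynomial.X G ∈ chowIdealZ rk := by
  have hlin : ∑ G : NonemptyFlat rk, (∑ i ∈ G.1, a i) • MvPolynomial.X G =
      ∑ i, a i • ∑ F : NonemptyFlat rk,
        if i ∈ F.1 then (MvPolynomial.X F : MvPolynomial (NonemptyFlat rk) ℤ) else 0 := by
    simp only [sum_smul, smul_sum, smul_ite, smul_zero]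
    rw [sum_comm]
    refine sum_congr rfl fun G _ => ?_
    rw [sum_ite_mem, univ_inter]
  rw [hlin]
  exact sum_mem fun i _ => Submodule.smul_of_tower_mem _ _ (Ideal.subset_span (Or.inr ⟨i, rfl⟩))

lemma rkDual_sdiff_sub_rkDual_univ (hM : IsMatroidRank rk) (G : Finset α) :
    rkDual rk (univ \ G) - rkDual rk univ = rk G - #G := by
  rw [rkDual, rkDual, sdiff_self, bot_eq_empty, sdiff_sdiff_self_left, univ_inter,
    card_sdiff_of_subset (subset_univ G), hM.rk_empty, Nat.cast_sub (card_le_card (subset_univ G))]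
  push_cast
  ring

end Matroid

/-- For a loopless matroid on `E`, the first Chern class of `L_{B(M*)}`, namely
`Σ_F (rk_{M*}(E∖F) - rk_{M*}(E)) z_F`, equals `Σ_F c_F h_F` in the Chow ring `A(M)`, the sum
over connected flats `F` of rank at least `2`, with
`c_F = Σ_{cl(S) = F} (-1)^{|S| - rk S + 1} β(M|S)`. -/
theorem dual_base_polytope_class_eq_simplicial_combination
    {α : Type} [Fintype α] [DecidableEq α]
    (rk : Finset α → ℕ) (hM : IsMatroidRank rk) (hloopless : ∀ e : α, rk {e} = 1) :
    Ideal.Quotient.mk (chowIdealZ rk)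
        (∑ F : NonemptyFlat rk,
          (rkDual rk (Finset.univ \ F.1) - rkDual rk Finset.univ) • MvPolynomial.X F) =
      Ideal.Quotient.mk (chowIdealZ rk)
        (∑ F ∈ Finset.univ.filter
            (fun F : NonemptyFlat rk => 2 ≤ rk F.1 ∧ IsConnRes rk F.1),
          (∑ T ∈ Finset.univ.powerset.filter (fun T : Finset α => matroidCl rk T = F.1),
              (-1 : ℤ) ^ (T.card - rk T + 1) * betaRes rk T) • hPolyZ rk F.1) := by
  rw [Ideal.Quotient.eq, sum_smul_hPolyZ, ← sum_sub_distrib]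
  convert sum_sum_smul_X_mem_chowIdealZ rk
    (fun i => (if parallelRep rk i = i then 1 else 0) - 1) using 2 with G
  rw [← sub_smul, rkDual_sdiff_sub_rkDual_univ hM, filter_filter]
  congr 1
  have hcoef := sum_connected_flats_sum_signedBeta hM hloopless G.2.2
  unfold signedBeta at hcoef
  simp only [sum_sub_distrib, sum_boole, sum_const]
  linear_combination hcoef
end
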